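/- arXiv:2107.09945 — 6 statements merged into one kernel-verified Lean document; each statement's English description precedes it below -/
import Mathlib

section
/- For every nonzero ordinal θ, the level 𝒟_θ of the Hausdorff difference hierarchy on C^ω equals the level Λ_θ of the fine Hausdorff hierarchy on C^ω. -/
/-!
Whether a point lies in `D_θ(O)` depends only on the least index at which it enters `O`, and
every step below is a computation of that index. Both inclusions go by induction on `θ`.

A set in `𝒟_θ` is cut along a partition into disjoint clopen cylinders, of `⋃_{η<θ} O_η` when
`θ` is a limit and of `O_ζ` when `θ = ζ + 1`. In the limit case each piece lies in a single
`O_ζ`, so there it is a difference set of a shorter length `ζ' < θ` of the same parity. In the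
successor case the piece is `V \ D_ζ(O)`, and its complement `Vᶜ ∪ D_ζ(O)` is again in `𝒟_ζ`:
the clopen set `Vᶜ` is added to the family from an index of the parity opposite to `ζ`.

Conversely, each piece `T` of an open union is moved inside its open envelope `E`. If `Tᶜ` is
in `𝒟_ζ`, then `T = E \ D_ζ` is a difference set of length `ζ + 1`. A family of length
`ζ ≤ θ` is lifted to length `θ` by moving every index `μ` to `μ` or `μ + 1`, whichever gives
the right parity. The pieces then glue because their envelopes are disjoint.
-/

open Set Topology

noncomputable section

def seqTop (C : Type) : TopologicalSpace (ℕ → C) :=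
  @Pi.topologicalSpace ℕ (fun _ => C) (fun _ => ⊥)

def pref {C : Type} (ρ : ℕ → C) (n : ℕ) : List C :=
  (List.range n).map ρ

def OrdEven (θ : Ordinal) : Prop :=
  ∃ (lam : Ordinal) (k : ℕ), (lam = 0 ∨ Order.IsSuccLimit lam) ∧ θ = lam + 2 * (k : Ordinal)

def HDiffSet {C : Type} (θ : Ordinal) (O : Ordinal → Set (ℕ → C)) : Set (ℕ → C) :=
  {ρ | (∃ η < θ, ρ ∈ O η) ∧ (OrdEven (sInf {η | η < θ ∧ ρ ∈ O η}) ↔ ¬ OrdEven θ)}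

def Dclass (C : Type) (θ : Ordinal) : Set (Set (ℕ → C)) :=
  {S | ∃ O : Ordinal → Set (ℕ → C),
      (∀ η < θ, IsOpen[seqTop C] (O η)) ∧
      (∀ η₁ η₂, η₁ ≤ η₂ → η₂ < θ → O η₁ ⊆ O η₂) ∧
      S = HDiffSet θ O}

def FineLambda (C : Type) : Ordinal → Set (Set (ℕ → C))
  | θ =>
    if θ = 1 then {S | IsOpen[seqTop C] S}
    else if 1 < θ then
      {S | ∃ (I : Type) (T O : I → Set (ℕ → C)) (η : I → {x : Ordinal // x < θ}),
        (∀ i, IsOpen[seqTop C] (O i)) ∧ (Pairwise fun i j => Disjoint (O i) (O j)) ∧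
        (∀ i, T i ⊆ O i) ∧ S = ⋃ i, T i ∧
        ∀ i, T i ∈ FineLambda C (η i) ∨ (T i)ᶜ ∈ FineLambda C (η i)}
    else ∅
termination_by θ => θ
decreasing_by all_goals exact (η i).2

def FineK (C : Type) (θ : Ordinal) : Set (Set (ℕ → C)) :=
  {S | Sᶜ ∈ FineLambda C θ}

open Ordinal

theorem Ordinal.two_mul_natCast (k : ℕ) : (2 : Ordinal) * k = ((2 * k : ℕ) : Ordinal) := by
  norm_cast

theorem ordEven_iff_even_mod {θ : Ordinal} {n : ℕ} (hn : θ % ω = n) : OrdEven θ ↔ Even n := by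
  constructor
  · rintro ⟨lam, k, hlam, rfl⟩
    obtain ⟨q, rfl⟩ : ω ∣ lam := by
      rcases hlam with rfl | h
      · exact dvd_zero ω
      · exact isSuccPrelimit_iff_omega0_dvd.1 h.isSuccPrelimit
    rw [two_mul_natCast, mul_add_mod_self, mod_eq_of_lt (natCast_lt_omega0 _), Nat.cast_inj] at hn
    exact ⟨k, by omega⟩
  · rintro ⟨k, rfl⟩
    refine ⟨ω * (θ / ω), k, ?_, ?_⟩
    · rcases eq_or_ne (θ / ω) 0 with h | h
      · simp [h]
      · exact Or.inr (isSuccLimit_mul_left isSuccLimit_omega0 (pos_iff_ne_zero.2 h))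
    · rw [two_mul_natCast, two_mul, ← hn, div_add_mod]

theorem add_one_mod_omega0 {θ : Ordinal} {n : ℕ} (hn : θ % ω = n) : (θ + 1) % ω = ↑(n + 1) := by
  rw [← div_add_mod θ ω, add_assoc, mul_add_mod_self, hn,
    mod_eq_of_lt (by exact_mod_cast natCast_lt_omega0 (n + 1))]
  push_cast; rfl

theorem ordEven_add_one (θ : Ordinal) : OrdEven (θ + 1) ↔ ¬OrdEven θ := by
  obtain ⟨n, hn⟩ := lt_omega0.1 (mod_lt θ omega0_ne_zero)
  rw [ordEven_iff_even_mod hn, ordEven_iff_even_mod (add_one_mod_omega0 hn), Nat.even_add_one]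

theorem ordEven_zero : OrdEven 0 := ⟨0, 0, Or.inl rfl, by simp⟩

theorem not_ordEven_one : ¬OrdEven 1 := by
  simpa using (ordEven_add_one 0).not.2 (not_not.2 ordEven_zero)

theorem exists_lt_ordEven_iff_not {ζ : Ordinal} (hζ : ζ ≠ 0) :
    ∃ i < ζ, (OrdEven i ↔ ¬OrdEven ζ) := by
  by_cases h : OrdEven ζ
  · have h1 : (1 : Ordinal) ≠ ζ := fun e => not_ordEven_one (e ▸ h)
    exact ⟨1, (Order.one_le_iff_ne_zero.2 hζ).lt_of_ne h1,
      iff_of_false not_ordEven_one (not_not.2 h)⟩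
  · exact ⟨0, pos_iff_ne_zero.2 hζ, iff_of_true ordEven_zero h⟩

theorem exists_between_ordEven_iff {θ ζ : Ordinal} (hθ : Order.IsSuccLimit θ) (hζ : ζ < θ) :
    ∃ ζ', ζ < ζ' ∧ ζ' < θ ∧ (OrdEven ζ' ↔ OrdEven θ) := by
  by_cases h : OrdEven (ζ + 1) ↔ OrdEven θ
  · exact ⟨ζ + 1, lt_add_one ζ, hθ.add_one_lt hζ, h⟩
  · refine ⟨ζ + 1 + 1, (lt_add_one ζ).trans (lt_add_one _), hθ.add_one_lt (hθ.add_one_lt hζ), ?_⟩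
    rw [ordEven_add_one]
    tauto

theorem exists_monotone_reindex {θ ζ : Ordinal} (h : ζ ≤ θ) :
    ∃ f : Ordinal → Ordinal, Monotone f ∧ (∀ μ < ζ, f μ < θ) ∧
      ∀ μ, (OrdEven (f μ) ↔ OrdEven θ) ↔ (OrdEven μ ↔ OrdEven ζ) := by
  by_cases hpar : OrdEven ζ ↔ OrdEven θ
  · exact ⟨id, monotone_id, fun μ hμ => hμ.trans_le h, fun μ => by rw [id, hpar]⟩
  · have hlt : ζ < θ := h.lt_of_ne fun e => hpar (e ▸ Iff.rfl)
    refine ⟨(· + 1), fun a b hab => add_le_add_left hab 1,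
      fun μ hμ => (Order.add_one_le_iff.2 hμ).trans_lt hlt, fun μ => ?_⟩
    rw [ordEven_add_one]
    tauto

section HDiffSet

variable {C : Type} {θ ζ : Ordinal} {O : Ordinal → Set (ℕ → C)} {ρ : ℕ → C}

def entryIndices (θ : Ordinal) (O : Ordinal → Set (ℕ → C)) (ρ : ℕ → C) : Set Ordinal :=
  {η | η < θ ∧ ρ ∈ O η}

theorem mem_HDiffSet :
    ρ ∈ HDiffSet θ O ↔
      (entryIndices θ O ρ).Nonempty ∧ (OrdEven (sInf (entryIndices θ O ρ)) ↔ ¬OrdEven θ) :=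
  Iff.rfl

theorem mem_HDiffSet_of_isLeast {l : Ordinal} (h : IsLeast (entryIndices θ O ρ) l) :
    ρ ∈ HDiffSet θ O ↔ (OrdEven l ↔ ¬OrdEven θ) := by
  rw [mem_HDiffSet, h.csInf_eq]
  exact and_iff_right ⟨l, h.1⟩

theorem notMem_HDiffSet (h : entryIndices θ O ρ = ∅) : ρ ∉ HDiffSet θ O := by
  simp [mem_HDiffSet, h]

theorem entryIndices_eq_empty_or_isLeast (θ : Ordinal) (O : Ordinal → Set (ℕ → C))
    (ρ : ℕ → C) :
    entryIndices θ O ρ = ∅ ∨ ∃ l, IsLeast (entryIndices θ O ρ) l :=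
  (eq_empty_or_nonempty _).imp_right fun h => ⟨_, isLeast_csInf h⟩

theorem mem_HDiffSet_congr {O' : Ordinal → Set (ℕ → C)}
    (h : entryIndices θ O ρ = entryIndices θ O' ρ) : ρ ∈ HDiffSet θ O ↔ ρ ∈ HDiffSet θ O' := by
  rw [mem_HDiffSet, mem_HDiffSet, h]

theorem HDiffSet_congr {O' : Ordinal → Set (ℕ → C)} (h : ∀ η < θ, O η = O' η) :
    HDiffSet θ O = HDiffSet θ O' :=
  ext fun _ => mem_HDiffSet_congr <| ext fun η =>
    and_congr_right fun hη => by rw [h η hη]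

theorem HDiffSet_subset_iUnion : HDiffSet θ O ⊆ ⋃ η : Iio θ, O η := by
  intro ρ h
  obtain ⟨η, hη, hρ⟩ := (mem_HDiffSet.1 h).1
  exact mem_iUnion.2 ⟨⟨η, hη⟩, hρ⟩

theorem HDiffSet_zero : HDiffSet 0 O = ∅ :=
  eq_empty_of_forall_notMem fun ρ h => by
    obtain ⟨η, hη, -⟩ := (mem_HDiffSet.1 h).1
    exact not_lt_zero hη

theorem HDiffSet_inter (V : Set (ℕ → C)) :
    HDiffSet θ (fun η => O η ∩ V) = HDiffSet θ O ∩ V := by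
  ext ρ
  by_cases hρ : ρ ∈ V
  · rw [mem_inter_iff, and_iff_left hρ]
    exact mem_HDiffSet_congr (by simp [entryIndices, hρ])
  · simp only [mem_inter_iff, hρ, and_false, iff_false]
    exact notMem_HDiffSet (by simp [entryIndices, hρ])

theorem HDiffSet_add_one (hO : ∀ η < θ, O η ⊆ O θ) :
    HDiffSet (θ + 1) O = O θ \ HDiffSet θ O := by
  ext ρ
  rcases entryIndices_eq_empty_or_isLeast θ O ρ with h | ⟨l, hl⟩
  · by_cases hρ : ρ ∈ O θ
    · have hleast : IsLeast (entryIndices (θ + 1) O ρ) θ := by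
        refine ⟨⟨Order.lt_add_one_iff.2 le_rfl, hρ⟩, fun η hη => not_lt.1 fun hηθ => ?_⟩
        exact h.subset ⟨hηθ, hη.2⟩
      rw [mem_HDiffSet_of_isLeast hleast, ordEven_add_one, mem_sdiff]
      exact iff_of_true (by tauto) ⟨hρ, notMem_HDiffSet h⟩
    · refine iff_of_false (notMem_HDiffSet ?_) fun h' => hρ h'.1
      refine eq_empty_of_forall_notMem fun η ⟨hη, hρη⟩ => hρ ?_
      rcases (Order.lt_add_one_iff.1 hη).lt_or_eq with hηθ | rfl
      · exact hO η hηθ hρη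
      · exact hρη
  · have hleast : IsLeast (entryIndices (θ + 1) O ρ) l := by
      refine ⟨⟨hl.1.1.trans (Order.lt_add_one_iff.2 le_rfl), hl.1.2⟩, fun η hη => ?_⟩
      by_cases hηθ : η < θ
      · exact hl.2 ⟨hηθ, hη.2⟩
      · exact hl.1.1.le.trans (not_lt.1 hηθ)
    rw [mem_HDiffSet_of_isLeast hleast, mem_sdiff, mem_HDiffSet_of_isLeast hl, ordEven_add_one]
    have := hO l hl.1.1 hl.1.2
    tauto

theorem HDiffSet_one : HDiffSet 1 O = O 0 := by
  simpa [HDiffSet_zero] using HDiffSet_add_one (θ := 0) (O := O) fun η hη => absurd hη not_lt_zero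

/-- A point that first enters `O` at `μ` first enters the new family at `f μ`. -/
theorem HDiffSet_reindex {f : Ordinal → Ordinal} (hf : Monotone f) (hfθ : ∀ μ < ζ, f μ < θ)
    (hpar : ∀ μ, (OrdEven (f μ) ↔ OrdEven θ) ↔ (OrdEven μ ↔ OrdEven ζ))
    (O : Ordinal → Set (ℕ → C)) :
    HDiffSet θ (fun η => ⋃ μ, ⋃ (_ : μ < ζ ∧ f μ ≤ η), O μ) = HDiffSet ζ O := by
  ext ρ
  rcases entryIndices_eq_empty_or_isLeast ζ O ρ with h | ⟨l, hl⟩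
  · refine iff_of_false (notMem_HDiffSet ?_) (notMem_HDiffSet h)
    refine eq_empty_of_forall_notMem fun η ⟨_, hρη⟩ => ?_
    simp only [mem_iUnion, exists_prop] at hρη
    obtain ⟨μ, ⟨hμ, -⟩, hρμ⟩ := hρη
    exact h.subset ⟨hμ, hρμ⟩
  · have hleast :
        IsLeast (entryIndices θ (fun η => ⋃ μ, ⋃ (_ : μ < ζ ∧ f μ ≤ η), O μ) ρ) (f l) := by
      refine ⟨⟨hfθ l hl.1.1, mem_biUnion ⟨hl.1.1, le_rfl⟩ hl.1.2⟩, fun η ⟨_, hρη⟩ => ?_⟩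
      simp only [mem_iUnion, exists_prop] at hρη
      obtain ⟨μ, ⟨hμ, hfμ⟩, hρμ⟩ := hρη
      exact (hf (hl.2 ⟨hμ, hρμ⟩)).trans hfμ
    rw [mem_HDiffSet_of_isLeast hleast, mem_HDiffSet_of_isLeast hl]
    have := hpar l
    tauto

theorem HDiffSet_eq_of_subset {ζ' : Ordinal} (hζ : ζ < ζ') (hζ' : ζ' ≤ θ)
    (hpar : OrdEven ζ' ↔ OrdEven θ) (hO : ∀ η < θ, O η ⊆ O ζ) :
    HDiffSet ζ' O = HDiffSet θ O := by
  ext ρ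
  rcases entryIndices_eq_empty_or_isLeast θ O ρ with h | ⟨l, hl⟩
  · refine iff_of_false (notMem_HDiffSet ?_) (notMem_HDiffSet h)
    exact eq_empty_of_forall_notMem fun η ⟨hη, hρη⟩ => h.subset ⟨hη.trans_le hζ', hρη⟩
  · have hlζ : l ≤ ζ := hl.2 ⟨hζ.trans_le hζ', hO l hl.1.1 hl.1.2⟩
    have hleast : IsLeast (entryIndices ζ' O ρ) l :=
      ⟨⟨hlζ.trans_lt hζ, hl.1.2⟩, fun η hη => hl.2 ⟨hη.1.trans_le hζ', hη.2⟩⟩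
    rw [mem_HDiffSet_of_isLeast hleast, mem_HDiffSet_of_isLeast hl, hpar]

theorem HDiffSet_union_compl {i₀ : Ordinal} (hi₀ : i₀ < θ) (hpar : OrdEven i₀ ↔ ¬OrdEven θ)
    (V : Set (ℕ → C)) :
    HDiffSet θ (fun η => if i₀ ≤ η then O η ∪ Vᶜ else O η ∩ V) = HDiffSet θ O ∪ Vᶜ := by
  ext ρ
  by_cases hρ : ρ ∈ V
  · simp only [mem_union, mem_compl_iff, hρ, not_true_eq_false, or_false]
    refine mem_HDiffSet_congr (ext fun η => ?_)
    by_cases h : i₀ ≤ η <;> simp [entryIndices, h, hρ]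
  · have hleast :
        IsLeast (entryIndices θ (fun η => if i₀ ≤ η then O η ∪ Vᶜ else O η ∩ V) ρ) i₀ := by
      refine ⟨⟨hi₀, by simp [hρ]⟩, fun η ⟨_, hρη⟩ => not_lt.1 fun hη => ?_⟩
      simp [not_le.2 hη, hρ] at hρη
    rw [mem_HDiffSet_of_isLeast hleast]
    exact iff_of_true hpar (Or.inr hρ)

theorem HDiffSet_iUnion {ι : Type*} {E : ι → Set (ℕ → C)}
    (hE : Pairwise fun i j => Disjoint (E i) (E j))
    {Q : ι → Ordinal → Set (ℕ → C)} (hQ : ∀ i, ∀ η < θ, Q i η ⊆ E i) :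
    HDiffSet θ (fun η => ⋃ i, Q i η) = ⋃ i, HDiffSet θ (Q i) := by
  have hsub : HDiffSet θ (fun η => ⋃ i, Q i η) ⊆ ⋃ i, E i :=
    HDiffSet_subset_iUnion.trans (iUnion_subset fun η => iUnion_mono fun i => hQ i η η.2)
  have hpiece : ∀ i, HDiffSet θ (fun η => ⋃ j, Q j η) ∩ E i = HDiffSet θ (Q i) := by
    intro i
    rw [← HDiffSet_inter]
    refine HDiffSet_congr fun η hη =>
      Subset.antisymm ?_ fun ρ hρ => ⟨mem_iUnion.2 ⟨i, hρ⟩, hQ i η hη hρ⟩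
    rintro ρ ⟨hρ, hρi⟩
    obtain ⟨j, hρj⟩ := mem_iUnion.1 hρ
    obtain rfl : j = i := by_contra fun hji => (hE hji).ne_of_mem (hQ j η hη hρj) hρi rfl
    exact hρj
  rw [← inter_eq_left.2 hsub, inter_iUnion]
  exact iUnion_congr hpiece

end HDiffSet

namespace PiNat

variable {E : ℕ → Type*} [∀ n, TopologicalSpace (E n)] [∀ n, DiscreteTopology (E n)]

theorem isClosed_cylinder (x : ∀ n, E n) (n : ℕ) : IsClosed (cylinder x n) := by
  rw [cylinder_eq_pi]
  exact isClosed_set_pi fun _ _ => isClosed_discrete _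

theorem exists_cylinder_subset {U : Set (∀ n, E n)} (hU : IsOpen U) {x : ∀ n, E n} (hx : x ∈ U) :
    ∃ n, cylinder x n ⊆ U := by
  obtain ⟨_, ⟨y, n, rfl⟩, hxy, hyU⟩ :=
    (isTopologicalBasis_cylinders E).exists_subset_of_mem_open hx hU
  exact ⟨n, (mem_cylinder_iff_eq.1 hxy).symm ▸ hyU⟩

/-- The pieces are the shortest cylinders contained in some `W i`. -/
theorem exists_pairwiseDisjoint_clopen {ι : Type*} (W : ι → Set (∀ n, E n))
    (hW : ∀ i, IsOpen (W i)) :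
    ∃ 𝒱 : Set (Set (∀ n, E n)), 𝒱.PairwiseDisjoint id ∧
      (∀ V ∈ 𝒱, IsClopen V ∧ ∃ i, V ⊆ W i) ∧ ⋃₀ 𝒱 = ⋃ i, W i := by
  let S : (∀ n, E n) → Set ℕ := fun x => {n | ∃ i, cylinder x n ⊆ W i}
  have S_congr : ∀ x n, ∀ y ∈ cylinder x n, ∀ m ≤ n, m ∈ S y ↔ m ∈ S x := by
    intro x n y hy m hm
    simp only [S, mem_ofPred_eq, mem_cylinder_iff_eq.1 (cylinder_anti x hm hy)]
  have S_nonempty : ∀ x ∈ ⋃ i, W i, (S x).Nonempty := by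
    intro x hx
    obtain ⟨i, hi⟩ := mem_iUnion.1 hx
    exact (exists_cylinder_subset (hW i) hi).imp fun n hn => ⟨i, hn⟩
  have sInf_S_eq : ∀ x ∈ ⋃ i, W i, ∀ y ∈ cylinder x (sInf (S x)), sInf (S y) = sInf (S x) := by
    intro x hx y hy
    have hxy := (S_congr x _ y hy _ le_rfl).2 (Nat.sInf_mem (S_nonempty x hx))
    refine le_antisymm (Nat.sInf_le hxy) (not_lt.1 fun hlt => ?_)
    exact Nat.notMem_of_lt_sInf hlt ((S_congr x _ y hy _ hlt.le).1 (Nat.sInf_mem ⟨_, hxy⟩))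
  have cyl_eq : ∀ x ∈ ⋃ i, W i, ∀ y ∈ cylinder x (sInf (S x)),
      cylinder y (sInf (S y)) = cylinder x (sInf (S x)) := fun x hx y hy => by
    rw [sInf_S_eq x hx y hy]
    exact mem_cylinder_iff_eq.1 hy
  refine ⟨(fun x => cylinder x (sInf (S x))) '' ⋃ i, W i, ?_, ?_, ?_⟩
  · refine pairwiseDisjoint_iff.2 ?_
    rintro _ ⟨x, hx, rfl⟩ _ ⟨x', hx', rfl⟩ ⟨y, hy, hy'⟩
    exact (cyl_eq x hx y hy).symm.trans (cyl_eq x' hx' y hy')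
  · rintro _ ⟨x, hx, rfl⟩
    exact ⟨⟨isClosed_cylinder x _, isOpen_cylinder E x _⟩, Nat.sInf_mem (S_nonempty x hx)⟩
  · refine Subset.antisymm (sUnion_subset ?_) fun x hx =>
      ⟨_, mem_image_of_mem _ hx, self_mem_cylinder x _⟩
    rintro _ ⟨x, hx, rfl⟩
    obtain ⟨i, hi⟩ := Nat.sInf_mem (S_nonempty x hx)
    exact hi.trans (subset_iUnion W i)

end PiNat

section Hierarchy

attribute [local instance] seqTop

variable {C : Type} {θ ζ : Ordinal} {S E : Set (ℕ → C)}

theorem exists_pairwiseDisjoint_clopen {ι : Type*} (W : ι → Set (ℕ → C)) (hW : ∀ i, IsOpen (W i)) :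
    ∃ 𝒱 : Set (Set (ℕ → C)), 𝒱.PairwiseDisjoint id ∧
      (∀ V ∈ 𝒱, IsClopen V ∧ ∃ i, V ⊆ W i) ∧ ⋃₀ 𝒱 = ⋃ i, W i := by
  let _ : TopologicalSpace C := ⊥
  have _ : DiscreteTopology C := ⟨rfl⟩
  exact PiNat.exists_pairwiseDisjoint_clopen W hW

def DclassOn (C : Type) (θ : Ordinal) (E : Set (ℕ → C)) : Set (Set (ℕ → C)) :=
  {S | ∃ O : Ordinal → Set (ℕ → C), (∀ η < θ, IsOpen (O η)) ∧
    (∀ η₁ η₂, η₁ ≤ η₂ → η₂ < θ → O η₁ ⊆ O η₂) ∧ (∀ η < θ, O η ⊆ E) ∧ S = HDiffSet θ O}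

theorem Dclass_one : Dclass C 1 = {S | IsOpen S} := by
  refine Subset.antisymm ?_ fun S hS => ⟨fun _ => S, fun _ _ => hS, fun _ _ _ _ => le_rfl, ?_⟩
  · rintro _ ⟨O, hO, -, rfl⟩
    rw [mem_ofPred_eq, HDiffSet_one]
    exact hO 0 zero_lt_one
  · rw [HDiffSet_one]

theorem inter_mem_DclassOn (hS : S ∈ Dclass C θ) (hE : IsOpen E) : S ∩ E ∈ DclassOn C θ E := by
  obtain ⟨O, hO, hmono, rfl⟩ := hS
  exact ⟨fun η => O η ∩ E, fun η hη => (hO η hη).inter hE,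
    fun η₁ η₂ h h₂ => inter_subset_inter_left E (hmono η₁ η₂ h h₂), fun _ _ => inter_subset_right,
    (HDiffSet_inter E).symm⟩

theorem diff_mem_DclassOn_add_one (hS : S ∈ DclassOn C ζ E) (hE : IsOpen E) :
    E \ S ∈ DclassOn C (ζ + 1) E := by
  obtain ⟨O, hO, hmono, hOE, rfl⟩ := hS
  refine ⟨fun η => if η < ζ then O η else E, fun η _ => ?_, fun η₁ η₂ h h₂ => ?_,
    fun η _ => ?_, ?_⟩
  · dsimp only
    split_ifs with h
    exacts [hO η h, hE]
  · dsimp only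
    split_ifs with h₁ h₂ h₂
    exacts [hmono η₁ η₂ h h₂, hOE η₁ h₁, absurd (h.trans_lt h₂) h₁, le_rfl]
  · dsimp only
    split_ifs with h
    exacts [hOE η h, le_rfl]
  · rw [HDiffSet_add_one fun η hη => by simpa [hη, lt_irrefl] using hOE η hη, if_neg (lt_irrefl ζ),
      HDiffSet_congr fun η hη => if_pos hη]

theorem mem_DclassOn_of_le (hS : S ∈ DclassOn C ζ E) (h : ζ ≤ θ) : S ∈ DclassOn C θ E := by
  obtain ⟨O, hO, -, hOE, rfl⟩ := hS
  obtain ⟨f, hf, hfθ, hpar⟩ := exists_monotone_reindex h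
  refine ⟨fun η => ⋃ μ, ⋃ (_ : μ < ζ ∧ f μ ≤ η), O μ,
    fun η _ => isOpen_iUnion fun μ => isOpen_iUnion fun hμ => hO μ hμ.1,
    fun η₁ η₂ h _ => iUnion₂_mono' fun μ hμ => ⟨μ, ⟨hμ.1, hμ.2.trans h⟩, le_rfl⟩,
    fun η _ => iUnion₂_subset fun μ hμ => hOE μ hμ.1, (HDiffSet_reindex hf hfθ hpar O).symm⟩

theorem iUnion_mem_Dclass {ι : Type} {S E : ι → Set (ℕ → C)}
    (hE : Pairwise fun i j => Disjoint (E i) (E j)) (hS : ∀ i, S i ∈ DclassOn C θ (E i)) :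
    ⋃ i, S i ∈ Dclass C θ := by
  choose O hO hmono hOE hSO using hS
  refine ⟨fun η => ⋃ i, O i η, fun η hη => isOpen_iUnion fun i => hO i η hη,
    fun η₁ η₂ h h₂ => iUnion_mono fun i => hmono i η₁ η₂ h h₂, ?_⟩
  rw [HDiffSet_iUnion hE hOE]
  exact iUnion_congr hSO

theorem FineLambda_zero : FineLambda C 0 = ∅ := by
  rw [FineLambda]
  simp

theorem FineLambda_one : FineLambda C 1 = {S | IsOpen S} := by
  rw [FineLambda]
  simp

theorem FineLambda_of_one_lt (hθ : 1 < θ) :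
    FineLambda C θ =
      {S | ∃ (I : Type) (T O : I → Set (ℕ → C)) (η : I → {x : Ordinal // x < θ}),
        (∀ i, IsOpen (O i)) ∧ (Pairwise fun i j => Disjoint (O i) (O j)) ∧
        (∀ i, T i ⊆ O i) ∧ S = ⋃ i, T i ∧
        ∀ i, T i ∈ FineLambda C (η i) ∨ (T i)ᶜ ∈ FineLambda C (η i)} := by
  rw [FineLambda, if_neg hθ.ne', if_pos hθ]

theorem iUnion_mem_FineLambda (hθ : 1 < θ) {I : Type} {T V : I → Set (ℕ → C)} (ζ : I → Ordinal)
    (hζ : ∀ i, ζ i < θ) (hV : ∀ i, IsOpen (V i)) (hdisj : Pairwise fun i j => Disjoint (V i) (V j))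
    (hTV : ∀ i, T i ⊆ V i) (hT : ∀ i, T i ∈ FineLambda C (ζ i) ∨ T i ∈ FineK C (ζ i)) :
    ⋃ i, T i ∈ FineLambda C θ := by
  rw [FineLambda_of_one_lt hθ]
  exact ⟨I, T, V, fun i => ⟨ζ i, hζ i⟩, hV, hdisj, hTV, rfl, hT⟩

theorem mem_DclassOn_of_mem_FineLambda (IH : ∀ ζ < θ, FineLambda C ζ ⊆ Dclass C ζ) {T : Set (ℕ → C)}
    (hζ : ζ < θ) (hE : IsOpen E) (hTE : T ⊆ E) (hT : T ∈ FineLambda C ζ ∨ T ∈ FineK C ζ) :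
    T ∈ DclassOn C θ E := by
  rcases hT with hT | hT
  · have hT' := inter_mem_DclassOn (IH ζ hζ hT) hE
    rw [inter_eq_left.2 hTE] at hT'
    exact mem_DclassOn_of_le hT' hζ.le
  · have hT' := diff_mem_DclassOn_add_one (inter_mem_DclassOn (IH ζ hζ hT) hE) hE
    rw [sdiff_inter_self_eq_sdiff, sdiff_compl, inter_eq_right.2 hTE] at hT'
    exact mem_DclassOn_of_le hT' (Order.add_one_le_iff.2 hζ)

theorem FineLambda_subset_Dclass (θ : Ordinal) : FineLambda C θ ⊆ Dclass C θ := by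
  induction θ using WellFoundedLT.induction with
  | _ θ IH =>
  rcases lt_trichotomy θ 1 with hθ | rfl | hθ
  · rw [Order.lt_one_iff.1 hθ, FineLambda_zero]
    exact empty_subset _
  · rw [FineLambda_one, Dclass_one]
  · intro S hS
    rw [FineLambda_of_one_lt hθ] at hS
    obtain ⟨I, T, E, ζ, hE, hdisj, hTE, rfl, hT⟩ := hS
    exact iUnion_mem_Dclass hdisj fun i =>
      mem_DclassOn_of_mem_FineLambda IH (ζ i).2 (hE i) (hTE i) (hT i)

theorem union_compl_mem_Dclass (hS : S ∈ Dclass C ζ) (hζ : ζ ≠ 0) {V : Set (ℕ → C)}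
    (hV : IsClopen V) : S ∪ Vᶜ ∈ Dclass C ζ := by
  obtain ⟨O, hO, hmono, rfl⟩ := hS
  obtain ⟨i₀, hi₀, hpar⟩ := exists_lt_ordEven_iff_not hζ
  refine ⟨fun η => if i₀ ≤ η then O η ∪ Vᶜ else O η ∩ V, fun η hη => ?_, fun η₁ η₂ h h₂ => ?_,
    (HDiffSet_union_compl hi₀ hpar V).symm⟩
  · dsimp only
    split_ifs
    exacts [(hO η hη).union hV.isClosed.isOpen_compl, (hO η hη).inter hV.isOpen]
  · have hO₁₂ := hmono η₁ η₂ h h₂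
    dsimp only
    split_ifs with h₁ h₂' h₂'
    · exact union_subset_union_left _ hO₁₂
    · exact absurd (h₁.trans h) h₂'
    · exact inter_subset_left.trans (hO₁₂.trans subset_union_left)
    · exact inter_subset_inter_left _ hO₁₂

theorem Dclass_add_one_subset (hζ : ζ ≠ 0) (IH : Dclass C ζ ⊆ FineLambda C ζ) :
    Dclass C (ζ + 1) ⊆ FineLambda C (ζ + 1) := by
  rintro _ ⟨O, hO, hmono, rfl⟩
  have hζ₁ : ζ < ζ + 1 := lt_add_one ζ
  have hD : HDiffSet ζ O ∈ Dclass C ζ := ⟨O, fun η hη => hO η (hη.trans hζ₁),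
    fun η₁ η₂ h h₂ => hmono η₁ η₂ h (h₂.trans hζ₁), rfl⟩
  obtain ⟨𝒱, hdisj, hclopen, hcover⟩ :=
    exists_pairwiseDisjoint_clopen (fun _ : Unit => O ζ) fun _ => hO ζ hζ₁
  rw [iUnion_const] at hcover
  rw [HDiffSet_add_one fun η hη => hmono η ζ hη.le hζ₁, ← hcover, sUnion_eq_iUnion, iUnion_sdiff]
  refine iUnion_mem_FineLambda (Order.lt_add_one_iff.2 (Order.one_le_iff_ne_zero.2 hζ))
    (fun _ => ζ) (fun _ => hζ₁) (fun V => (hclopen V V.2).1.isOpen) hdisj.subtype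
    (fun _ => sdiff_subset) fun V => Or.inr ?_
  rw [FineK, mem_ofPred_eq, compl_sdiff]
  exact IH (union_compl_mem_Dclass hD hζ (hclopen V V.2).1)

theorem exists_inter_mem_Dclass_of_isSuccLimit (hθ : Order.IsSuccLimit θ)
    {O : Ordinal → Set (ℕ → C)} (hO : ∀ η < θ, IsOpen (O η))
    (hmono : ∀ η₁ η₂, η₁ ≤ η₂ → η₂ < θ → O η₁ ⊆ O η₂) (hζ : ζ < θ) {V : Set (ℕ → C)}
    (hV : IsOpen V) (hVO : V ⊆ O ζ) : ∃ ζ' < θ, ζ' ≠ 0 ∧ HDiffSet θ O ∩ V ∈ Dclass C ζ' := by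
  obtain ⟨ζ', hζζ', hζ'θ, hpar⟩ := exists_between_ordEven_iff hθ hζ
  refine ⟨ζ', hζ'θ, hζζ'.ne_bot, fun η => O η ∩ V, fun η hη => (hO η (hη.trans hζ'θ)).inter hV,
    fun η₁ η₂ h h₂ => inter_subset_inter_left V (hmono η₁ η₂ h (h₂.trans hζ'θ)), ?_⟩
  rw [← HDiffSet_inter, HDiffSet_eq_of_subset hζζ' hζ'θ.le hpar]
  exact fun η _ => subset_inter (inter_subset_right.trans hVO) inter_subset_right

theorem Dclass_subset_of_isSuccLimit (hθ : Order.IsSuccLimit θ)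
    (IH : ∀ ζ < θ, ζ ≠ 0 → Dclass C ζ ⊆ FineLambda C ζ) : Dclass C θ ⊆ FineLambda C θ := by
  rintro _ ⟨O, hO, hmono, rfl⟩
  obtain ⟨𝒱, hdisj, hclopen, hcover⟩ :=
    exists_pairwiseDisjoint_clopen (fun η : Iio θ => O η) fun η => hO η η.2
  have hpiece : ∀ V : 𝒱, ∃ ζ' < θ, ζ' ≠ 0 ∧ HDiffSet θ O ∩ V ∈ Dclass C ζ' := fun V =>
    let ⟨hV, ζ, hVζ⟩ := hclopen V V.2
    exists_inter_mem_Dclass_of_isSuccLimit hθ hO hmono ζ.2 hV.isOpen hVζ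
  choose ζ' hζ'θ hζ'0 hζ' using hpiece
  rw [← inter_eq_left.2 (HDiffSet_subset_iUnion.trans hcover.ge), sUnion_eq_iUnion, inter_iUnion]
  exact iUnion_mem_FineLambda (Ordinal.one_lt_of_isSuccLimit hθ) ζ' hζ'θ
    (fun V => (hclopen V V.2).1.isOpen) hdisj.subtype (fun _ => inter_subset_right)
    fun V => Or.inl (IH _ (hζ'θ V) (hζ'0 V) (hζ' V))

theorem Dclass_subset_FineLambda (hθ : θ ≠ 0) : Dclass C θ ⊆ FineLambda C θ := by
  induction θ using Ordinal.limitRecOn with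
  | zero => exact absurd rfl hθ
  | add_one ζ IH =>
    rcases eq_or_ne ζ 0 with rfl | hζ
    · rw [zero_add, Dclass_one, FineLambda_one]
    · exact Dclass_add_one_subset hζ (IH hζ)
  | limit θ hlim IH => exact Dclass_subset_of_isSuccLimit hlim IH

end Hierarchy

/-- For every nonzero ordinal `θ`, the level `𝒟_θ` of the Hausdorff difference hierarchy
equals the level `Λ_θ` of the fine Hausdorff hierarchy. -/
theorem statement1 (C : Type) (θ : Ordinal) (hθ : θ ≠ 0) :
    Dclass C θ = FineLambda C θ :=
  (Dclass_subset_FineLambda hθ).antisymm (FineLambda_subset_Dclass θ)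
end
end

section
/- For a subset S of C^ω the following are equivalent: (1) S ∈ Δ⁰₂, i.e. S is both a countable union of closed sets and a countable intersection of open sets; (2) S belongs to some level 𝒟_θ of the Hausdorff difference hierarchy; (3) S belongs to some level Λ_θ of the fine Hausdorff hierarchy; (4) there exists an eventually constant labelling function l : C* → {0,1} such that S = 1_l. -/
open Set Topology

noncomputable section

/-- A labelling function `l : C* → {0,1}` is eventually constant if along every infinite
sequence the labels of the finite prefixes are eventually constant. -/
def EventuallyConstantLabel {C : Type} (l : List C → Bool) : Prop :=
  ∀ ρ : ℕ → C, ∃ N : ℕ, ∀ m : ℕ, N ≤ m → l (pref ρ m) = l (pref ρ N)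

/-- `1_l`: the set of infinite sequences infinitely many of whose prefixes are labelled `1`. -/
def OneSet {C : Type} (l : List C → Bool) : Set (ℕ → C) :=
  {ρ | ∀ N : ℕ, ∃ n : ℕ, N ≤ n ∧ l (pref ρ n) = true}

/-!
(1 → 4) Write `S = ⋂ Oⱼ` and `Sᶜ = ⋂ Uⱼ` with decreasing open sets. As `Oⱼ ∪ Uⱼ` is the whole
space, long enough prefixes `s` of `ρ` have their cylinder inside `Oⱼ` or `Uⱼ` for ever larger
`j ≤ |s|`; labelling `s` by whether its cylinder lies in `Oⱼ` for the deepest such `j` converges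
to `ρ ∈ S`.

(2 → 4) Run the parity test of `D_θ` on cylinders instead of points: the least `η` with
`ρ ∈ O_η` is eventually the least `η` with `O_η` containing the cylinder of a prefix of `ρ`.

(4 → 2, 3) For an eventually constant `l`, the relation "`t` extends `s` and `l t ≠ l s`" is well
founded, since an infinite chain converges to a sequence whose labels flip infinitely often. With
its rank `r`, the potential `2 r(s) + [l s = 0]` decreases along prefixes, so the least `η` such
that some prefix of `ρ` has potential `≤ η` is the eventual potential, whose parity is the eventual
label. For the fine hierarchy, the sequences through `s` whose eventual label differs from `l s`
are the open union, over the minimal flips `t` of `s`, of the sequences through `t` whose eventual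
label is `l t`; induction on `r` puts them at level `r(s) + 2`.

(3 → 1) In this metrizable space open and closed sets are Gδ, and Gδ sets are closed under open
unions; hence Δ⁰₂ contains the open sets and is closed under complements and open unions.
-/

open Function

lemma compl_iUnion_eq_of_pairwise_disjoint {X ι : Type*} {T O : ι → Set X}
    (hd : Pairwise (Disjoint on O)) (hTO : ∀ i, T i ⊆ O i) :
    (⋃ i, T i)ᶜ = (⋃ i, O i)ᶜ ∪ ⋃ i, O i ∩ (T i)ᶜ := by
  ext ρ
  simp only [mem_compl_iff, mem_union, mem_iUnion, mem_inter_iff, not_exists]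
  constructor
  · intro hT
    by_cases hO : ∃ i, ρ ∈ O i
    · obtain ⟨i, hi⟩ := hO
      exact Or.inr ⟨i, hi, hT i⟩
    · exact Or.inl (not_exists.1 hO)
  · rintro (hO | ⟨i, hi, hTi⟩) j hj
    · exact hO j (hTO j hj)
    · obtain rfl : j = i := by_contra fun hne => (hd hne).le_bot ⟨hTO j hj, hi⟩
      exact hTi hj

section IsDelta02

variable {X : Type*} [TopologicalSpace X]

def IsDelta02 (S : Set X) : Prop := IsGδ S ∧ IsGδ Sᶜ

lemma isGδ_compl_iff_eq_iUnion_nat {S : Set X} :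
    IsGδ Sᶜ ↔ ∃ F : ℕ → Set X, (∀ n, IsClosed (F n)) ∧ S = ⋃ n, F n := by
  rw [isGδ_iff_eq_iInter_nat]
  constructor
  · rintro ⟨U, hU, hSU⟩
    exact ⟨fun n => (U n)ᶜ, fun n => (hU n).isClosed_compl,
      by rw [← compl_iInter, ← hSU, compl_compl]⟩
  · rintro ⟨F, hF, rfl⟩
    exact ⟨fun n => (F n)ᶜ, fun n => (hF n).isOpen_compl, compl_iUnion F⟩

lemma isDelta02_iff {S : Set X} : IsDelta02 S ↔
    (∃ F : ℕ → Set X, (∀ n, IsClosed (F n)) ∧ S = ⋃ n, F n) ∧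
      (∃ O : ℕ → Set X, (∀ n, IsOpen (O n)) ∧ S = ⋂ n, O n) := by
  rw [IsDelta02, isGδ_compl_iff_eq_iUnion_nat, isGδ_iff_eq_iInter_nat, and_comm]

lemma IsDelta02.compl {S : Set X} (h : IsDelta02 S) : IsDelta02 Sᶜ :=
  ⟨h.2, (compl_compl S).symm ▸ h.1⟩

lemma IsGδ.exists_antitone {S : Set X} (h : IsGδ S) :
    ∃ O : ℕ → Set X, (∀ n, IsOpen (O n)) ∧ Antitone O ∧ S = ⋂ n, O n := by
  obtain ⟨U, hU, rfl⟩ := isGδ_iff_eq_iInter_nat.1 h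
  refine ⟨fun n => ⋂ k ∈ Iic n, U k, fun n => (finite_Iic n).isOpen_biInter fun k _ => hU k,
    fun m n hmn => biInter_subset_biInter_left (Iic_subset_Iic.2 hmn), ?_⟩
  ext ρ
  simp only [mem_iInter, mem_Iic]
  exact ⟨fun h n k _ => h k, fun h k => h k k le_rfl⟩

lemma IsGδ.iUnion_of_pairwise_disjoint {ι : Type*} {T O : ι → Set X} (hT : ∀ i, IsGδ (T i))
    (hO : ∀ i, IsOpen (O i)) (hd : Pairwise (Disjoint on O)) (hTO : ∀ i, T i ⊆ O i) :
    IsGδ (⋃ i, T i) := by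
  choose U hU hTU using fun i => isGδ_iff_eq_iInter_nat.1 (hT i)
  refine isGδ_iff_eq_iInter_nat.2 ⟨fun n => ⋃ i, U i n ∩ O i,
    fun n => isOpen_iUnion fun i => (hU i n).inter (hO i), ?_⟩
  ext ρ
  simp only [mem_iUnion, mem_iInter, mem_inter_iff, hTU]
  constructor
  · rintro ⟨i, hi⟩ n
    exact ⟨i, hi n, hTO i (by simpa only [hTU, mem_iInter] using hi)⟩
  · intro h
    choose i hiU hiO using h
    have hi : ∀ n, i n = i 0 := fun n => by_contra fun hne => (hd hne).le_bot ⟨hiO n, hiO 0⟩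
    exact ⟨i 0, fun n => hi n ▸ hiU n⟩

variable [PerfectlyNormalSpace X]

lemma IsOpen.isDelta02 {S : Set X} (h : IsOpen S) : IsDelta02 S :=
  ⟨h.isGδ, h.isClosed_compl.isGδ⟩

lemma IsDelta02.iUnion_of_pairwise_disjoint {ι : Type*} {T O : ι → Set X}
    (hT : ∀ i, IsDelta02 (T i)) (hO : ∀ i, IsOpen (O i)) (hd : Pairwise (Disjoint on O))
    (hTO : ∀ i, T i ⊆ O i) : IsDelta02 (⋃ i, T i) := by
  refine ⟨.iUnion_of_pairwise_disjoint (fun i => (hT i).1) hO hd hTO, ?_⟩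
  rw [compl_iUnion_eq_of_pairwise_disjoint hd hTO]
  exact (isOpen_iUnion hO).isClosed_compl.isGδ.union <|
    .iUnion_of_pairwise_disjoint (fun i => (hO i).isGδ.inter (hT i).2) hO hd
      fun i => inter_subset_left

end IsDelta02

attribute [local instance] seqTop

namespace Delta02

open Filter
open scoped Classical

variable {C : Type}

section Cylinders

@[simp] lemma length_pref (ρ : ℕ → C) (n : ℕ) : (pref ρ n).length = n := by
  simp [pref]

@[simp] lemma getElem_pref (ρ : ℕ → C) (n i : ℕ) (h : i < (pref ρ n).length) :
    (pref ρ n)[i] = ρ i := by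
  simp [pref]

lemma pref_eq_pref_iff {ρ σ : ℕ → C} {n : ℕ} : pref σ n = pref ρ n ↔ ∀ i < n, σ i = ρ i := by
  simp [pref, List.map_inj_left]

lemma take_pref (ρ : ℕ → C) {m n : ℕ} (h : m ≤ n) : (pref ρ n).take m = pref ρ m := by
  rw [pref, pref, ← List.map_take, List.take_range, min_eq_left h]

lemma pref_prefix (ρ : ℕ → C) {m n : ℕ} (h : m ≤ n) : pref ρ m <+: pref ρ n :=
  take_pref ρ h ▸ List.take_prefix m (pref ρ n)

def cyl (s : List C) : Set (ℕ → C) := {ρ | pref ρ s.length = s}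

lemma mem_cyl_pref {ρ σ : ℕ → C} {n : ℕ} : σ ∈ cyl (pref ρ n) ↔ pref σ n = pref ρ n := by
  simp [cyl]

lemma mem_cyl_pref_self (ρ : ℕ → C) (n : ℕ) : ρ ∈ cyl (pref ρ n) := mem_cyl_pref.2 rfl

lemma cyl_pref_eq_cylinder (ρ : ℕ → C) (n : ℕ) : cyl (pref ρ n) = PiNat.cylinder ρ n := by
  ext σ
  rw [mem_cyl_pref, pref_eq_pref_iff, PiNat.mem_cylinder_iff]

lemma cyl_eq_cyl_pref {s : List C} {ρ : ℕ → C} (h : ρ ∈ cyl s) :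
    cyl s = cyl (pref ρ s.length) := by
  rw [h]

lemma cyl_anti {s t : List C} (h : s <+: t) : cyl t ⊆ cyl s := fun ρ (hρ : _ = t) =>
  calc pref ρ s.length = (pref ρ t.length).take s.length := (take_pref ρ h.length_le).symm
    _ = s := by rw [hρ, ← List.prefix_iff_eq_take.1 h]

lemma cyl_pref_anti (ρ : ℕ → C) {m n : ℕ} (h : m ≤ n) : cyl (pref ρ n) ⊆ cyl (pref ρ m) := by
  intro σ hσ
  rw [mem_cyl_pref, pref_eq_pref_iff] at *
  exact fun i hi => hσ i (hi.trans_le h)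

lemma prefix_of_mem_cyl {s t : List C} {ρ : ℕ → C} (hs : ρ ∈ cyl s) (ht : ρ ∈ cyl t)
    (h : s.length ≤ t.length) : s <+: t := by
  have := pref_prefix ρ h
  rwa [hs, ht] at this

lemma isOpen_iff_forall_cyl {A : Set (ℕ → C)} :
    IsOpen A ↔ ∀ ρ ∈ A, ∃ n, cyl (pref ρ n) ⊆ A := by
  let _ : TopologicalSpace C := ⊥
  have _ : DiscreteTopology C := ⟨rfl⟩
  refine ((PiNat.isTopologicalBasis_cylinders fun _ => C).isOpen_iff (s := A)).trans ?_
  simp only [cyl_pref_eq_cylinder]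
  constructor
  · rintro h ρ hρ
    obtain ⟨_, ⟨x, n, rfl⟩, hρx, hxA⟩ := h ρ hρ
    exact ⟨n, PiNat.mem_cylinder_iff_eq.1 hρx ▸ hxA⟩
  · rintro h ρ hρ
    obtain ⟨n, hn⟩ := h ρ hρ
    exact ⟨_, ⟨ρ, n, rfl⟩, PiNat.self_mem_cylinder ρ n, hn⟩

lemma isOpen_cyl (s : List C) : IsOpen (cyl s) :=
  isOpen_iff_forall_cyl.2 fun _ hρ => ⟨s.length, (cyl_eq_cyl_pref hρ).ge⟩

lemma isClosed_cyl (s : List C) : IsClosed (cyl s) := by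
  refine isOpen_compl_iff.1 (isOpen_iff_forall_cyl.2 fun ρ hρ => ⟨s.length, fun σ hσ hσs => ?_⟩)
  exact hρ ((mem_cyl_pref.1 hσ).symm.trans hσs)

-- `seqTop C` is the product of discrete topologies only after unfolding, so instance search
-- cannot see through it and the product instance is transported by hand.
instance : PerfectlyNormalSpace (ℕ → C) := by
  let _ : TopologicalSpace C := ⊥
  have _ : DiscreteTopology C := ⟨rfl⟩
  exact (inferInstance : @PerfectlyNormalSpace (ℕ → C) Pi.topologicalSpace)

end Cylinders

section Labels

variable {l : List C → Bool}

lemma mem_oneSet_iff_frequently {ρ : ℕ → C} :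
    ρ ∈ OneSet l ↔ ∃ᶠ n in atTop, l (pref ρ n) = true :=
  frequently_atTop.symm

lemma eventuallyConstantLabel_and_eq_oneSet {S : Set (ℕ → C)}
    (h : ∀ ρ, ∀ᶠ n in atTop, l (pref ρ n) = decide (ρ ∈ S)) :
    EventuallyConstantLabel l ∧ S = OneSet l := by
  refine ⟨fun ρ => ?_, Set.ext fun ρ => ?_⟩
  · obtain ⟨N, hN⟩ := eventually_atTop.1 (h ρ)
    exact ⟨N, fun m hm => (hN m hm).trans (hN N le_rfl).symm⟩
  · rw [mem_oneSet_iff_frequently]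
    constructor
    · intro hρ
      exact (h ρ).frequently.mono fun n hn => hn.trans (decide_eq_true hρ)
    · intro hρ
      obtain ⟨n, hn, hdec⟩ := (hρ.and_eventually (h ρ)).exists
      exact of_decide_eq_true (hdec ▸ hn)

def limLabel (hl : EventuallyConstantLabel l) (ρ : ℕ → C) : Bool :=
  l (pref ρ (hl ρ).choose)

variable (hl : EventuallyConstantLabel l)

lemma eventually_eq_limLabel (ρ : ℕ → C) : ∀ᶠ n in atTop, l (pref ρ n) = limLabel hl ρ :=
  eventually_atTop.2 ⟨_, (hl ρ).choose_spec⟩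

lemma mem_oneSet_iff_limLabel {ρ : ℕ → C} : ρ ∈ OneSet l ↔ limLabel hl ρ = true := by
  rw [mem_oneSet_iff_frequently]
  constructor
  · intro hρ
    obtain ⟨n, hn, hlim⟩ := (hρ.and_eventually (eventually_eq_limLabel hl ρ)).exists
    exact hlim ▸ hn
  · intro hρ
    exact (eventually_eq_limLabel hl ρ).frequently.mono fun n hn => hn.trans hρ

end Labels

section SettledLabel

def settledDepth (O U : ℕ → Set (ℕ → C)) (s : List C) : ℕ :=
  Nat.findGreatest (fun j => cyl s ⊆ O j ∨ cyl s ⊆ U j) s.length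

def settledLabel (O U : ℕ → Set (ℕ → C)) (s : List C) : Bool :=
  decide (cyl s ⊆ O (settledDepth O U s))

variable {O U : ℕ → Set (ℕ → C)}

lemma eventually_le_settledDepth (hO : ∀ j, IsOpen (O j)) (hU : ∀ j, IsOpen (U j))
    (hOU : ∀ j, O j ∪ U j = univ) (ρ : ℕ → C) (j₀ : ℕ) :
    ∀ᶠ n in atTop, j₀ ≤ settledDepth O U (pref ρ n) ∧
      (cyl (pref ρ n) ⊆ O (settledDepth O U (pref ρ n)) ∨
        cyl (pref ρ n) ⊆ U (settledDepth O U (pref ρ n))) := by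
  obtain ⟨m, hm⟩ : ∃ m, cyl (pref ρ m) ⊆ O j₀ ∨ cyl (pref ρ m) ⊆ U j₀ := by
    rcases (hOU j₀).ge (mem_univ ρ) with hρ | hρ
    · exact (isOpen_iff_forall_cyl.1 (hO j₀) ρ hρ).imp fun _ => Or.inl
    · exact (isOpen_iff_forall_cyl.1 (hU j₀) ρ hρ).imp fun _ => Or.inr
  filter_upwards [eventually_ge_atTop (max m j₀)] with n hn
  have hmn := cyl_pref_anti ρ (le_of_max_le_left hn)
  have hsettled : cyl (pref ρ n) ⊆ O j₀ ∨ cyl (pref ρ n) ⊆ U j₀ := hm.imp hmn.trans hmn.trans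
  have hj₀ : j₀ ≤ (pref ρ n).length := (length_pref ρ n).symm ▸ le_of_max_le_right hn
  exact ⟨Nat.le_findGreatest hj₀ hsettled,
    Nat.findGreatest_spec (P := fun j => _ ⊆ O j ∨ _ ⊆ U j) hj₀ hsettled⟩

lemma eventually_settledLabel_eq {S : Set (ℕ → C)} (hO : ∀ j, IsOpen (O j)) (hOa : Antitone O)
    (hSO : S = ⋂ j, O j) (hU : ∀ j, IsOpen (U j)) (hUa : Antitone U) (hSU : Sᶜ = ⋂ j, U j)
    (ρ : ℕ → C) : ∀ᶠ n in atTop, settledLabel O U (pref ρ n) = decide (ρ ∈ S) := by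
  have hOU : ∀ j, O j ∪ U j = univ := fun j => eq_univ_of_forall fun σ => by
    by_cases hσ : σ ∈ S
    · exact Or.inl (mem_iInter.1 (hSO ▸ hσ) j)
    · exact Or.inr (mem_iInter.1 (hSU ▸ hσ) j)
  by_cases hρ : ρ ∈ S
  · obtain ⟨j₀, hj₀⟩ : ∃ j₀, ρ ∉ U j₀ := by
      by_contra! h
      exact (hSU ▸ mem_iInter.2 h : ρ ∈ Sᶜ) hρ
    filter_upwards [eventually_le_settledDepth hO hU hOU ρ j₀] with n ⟨hle, hsettled⟩
    refine (decide_eq_true (hsettled.resolve_right fun hsub => ?_)).trans (decide_eq_true hρ).symm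
    exact hj₀ (hUa hle (hsub (mem_cyl_pref_self ρ n)))
  · obtain ⟨j₀, hj₀⟩ : ∃ j₀, ρ ∉ O j₀ := by
      by_contra! h
      exact hρ (hSO ▸ mem_iInter.2 h)
    filter_upwards [eventually_le_settledDepth hO hU hOU ρ j₀] with n hn
    refine (decide_eq_false fun hsub => ?_).trans (decide_eq_false hρ).symm
    exact hj₀ (hOa hn.1 (hsub (mem_cyl_pref_self ρ n)))

lemma exists_label_of_isDelta02 {S : Set (ℕ → C)} (hS : IsDelta02 S) :
    ∃ l : List C → Bool, EventuallyConstantLabel l ∧ S = OneSet l := by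
  obtain ⟨O, hO, hOa, hSO⟩ := hS.1.exists_antitone
  obtain ⟨U, hU, hUa, hSU⟩ := hS.2.exists_antitone
  exact ⟨_, eventuallyConstantLabel_and_eq_oneSet
    (eventually_settledLabel_eq hO hOa hSO hU hUa hSU)⟩

end SettledLabel

section DifferenceHierarchy

open Ordinal

lemma eventually_sInf_cyl_eq {θ : Ordinal} {O : Ordinal → Set (ℕ → C)}
    (hO : ∀ η < θ, IsOpen (O η)) (ρ : ℕ → C) :
    ∀ᶠ n in atTop, ((∃ η < θ, cyl (pref ρ n) ⊆ O η) ↔ ∃ η < θ, ρ ∈ O η) ∧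
      sInf {η | η < θ ∧ cyl (pref ρ n) ⊆ O η} = sInf {η | η < θ ∧ ρ ∈ O η} := by
  have hsub : ∀ n, {η | η < θ ∧ cyl (pref ρ n) ⊆ O η} ⊆ {η | η < θ ∧ ρ ∈ O η} :=
    fun n η hη => ⟨hη.1, hη.2 (mem_cyl_pref_self ρ n)⟩
  by_cases hρ : ∃ η < θ, ρ ∈ O η
  · have hμ := csInf_mem (s := {η | η < θ ∧ ρ ∈ O η}) hρ
    obtain ⟨n₀, hn₀⟩ := isOpen_iff_forall_cyl.1 (hO _ hμ.1) ρ hμ.2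
    filter_upwards [eventually_ge_atTop n₀] with n hn
    have hμn : sInf {η | η < θ ∧ ρ ∈ O η} ∈ {η | η < θ ∧ cyl (pref ρ n) ⊆ O η} :=
      ⟨hμ.1, (cyl_pref_anti ρ hn).trans hn₀⟩
    exact ⟨iff_of_true ⟨_, hμn⟩ hρ, IsLeast.csInf_eq ⟨hμn, fun η hη => csInf_le' (hsub n hη)⟩⟩
  · refine Eventually.of_forall fun n => ⟨iff_of_false (fun ⟨η, hη⟩ => hρ ⟨η, hsub n hη⟩) hρ, ?_⟩
    exact congrArg sInf (Set.ext fun η => iff_of_false (fun hη => hρ ⟨η, hsub n hη⟩)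
      fun hη => hρ ⟨η, hη⟩)

lemma exists_label_of_mem_dclass {θ : Ordinal} {S : Set (ℕ → C)} (hS : S ∈ Dclass C θ) :
    ∃ l : List C → Bool, EventuallyConstantLabel l ∧ S = OneSet l := by
  obtain ⟨O, hO, -, rfl⟩ := hS
  refine ⟨fun s => decide ((∃ η < θ, cyl s ⊆ O η) ∧
    (OrdEven (sInf {η | η < θ ∧ cyl s ⊆ O η}) ↔ ¬ OrdEven θ)),
    eventuallyConstantLabel_and_eq_oneSet fun ρ => ?_⟩
  filter_upwards [eventually_sInf_cyl_eq hO ρ] with n hn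
  rw [hn.1, hn.2]
  exact decide_eq_decide.2 Iff.rfl

lemma zero_or_isSuccLimit_iff_omega0_dvd {a : Ordinal} :
    (a = 0 ∨ Order.IsSuccLimit a) ↔ ω ∣ a := by
  rw [← isSuccPrelimit_iff_omega0_dvd, Order.isSuccLimit_iff_of_orderBot, bot_eq_zero]
  rcases eq_or_ne a 0 with rfl | ha
  · simp
  · simp [ha]

lemma ordEven_iff {θ : Ordinal} :
    OrdEven θ ↔ ∃ (q : Ordinal) (k : ℕ), θ = ω * q + 2 * (k : Ordinal) := by
  simp only [OrdEven, zero_or_isSuccLimit_iff_omega0_dvd]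
  constructor
  · rintro ⟨_, k, ⟨q, rfl⟩, rfl⟩
    exact ⟨q, k, rfl⟩
  · rintro ⟨q, k, rfl⟩
    exact ⟨_, k, dvd_mul_right ω q, rfl⟩

lemma omega0_mul_add_natCast_mod (q : Ordinal) (m : ℕ) : (ω * q + m) % ω = m := by
  rw [mul_add_mod_self, natCast_mod_omega0]

lemma exists_two_mul_eq (a : Ordinal) :
    ∃ (q : Ordinal) (n : ℕ), 2 * a = ω * q + 2 * (n : Ordinal) := by
  obtain ⟨n, hn⟩ := lt_omega0.1 (mod_lt a omega0_ne_zero)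
  refine ⟨a / ω, n, ?_⟩
  conv_lhs => rw [← div_add_mod a ω, hn]
  rw [mul_add, ← mul_assoc, mul_omega0 two_pos (natCast_lt_omega0 2)]

lemma ordEven_two_mul (a : Ordinal) : OrdEven (2 * a) :=
  ordEven_iff.2 (exists_two_mul_eq a)

lemma not_ordEven_two_mul_add_one (a : Ordinal) : ¬ OrdEven (2 * a + 1) := by
  rw [ordEven_iff]
  rintro ⟨q, k, h⟩
  obtain ⟨q', n, hn⟩ := exists_two_mul_eq a
  have hmod := congrArg (· % ω) h
  rw [hn, add_assoc] at hmod
  norm_cast at hmod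
  rw [omega0_mul_add_natCast_mod, omega0_mul_add_natCast_mod, Nat.cast_inj] at hmod
  omega

end DifferenceHierarchy

section FineHierarchy

lemma union_iUnion_mem_fineLambda {θ : Ordinal} (hθ : 1 < θ) {U : Set (ℕ → C)} (hU : IsOpen U)
    {ι : Type} {T O : ι → Set (ℕ → C)} (η : ι → Ordinal) (hη : ∀ i, η i < θ)
    (hO : ∀ i, IsOpen (O i)) (hd : Pairwise (Disjoint on O)) (hUO : ∀ i, Disjoint U (O i))
    (hTO : ∀ i, T i ⊆ O i) (hT : ∀ i, T i ∈ FineLambda C (η i) ∨ (T i)ᶜ ∈ FineLambda C (η i)) :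
    U ∪ ⋃ i, T i ∈ FineLambda C θ := by
  rw [FineLambda, if_neg hθ.ne', if_pos hθ]
  refine ⟨Option ι, fun i => i.elim U T, fun i => i.elim U O,
    fun i => i.elim ⟨1, hθ⟩ fun i => ⟨η i, hη i⟩, ?_, ?_, ?_, ?_, ?_⟩
  · rintro (_ | i)
    exacts [hU, hO i]
  · rintro (_ | i) (_ | j) hij
    · exact absurd rfl hij
    · exact hUO j
    · exact (hUO i).symm
    · exact hd fun h => hij (congrArg some h)
  · rintro (_ | i)
    exacts [subset_rfl, hTO i]
  · exact (iUnion_option fun i => i.elim U T).symm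
  · rintro (_ | i)
    · left
      show U ∈ FineLambda C 1
      rw [FineLambda, if_pos rfl]
      exact hU
    · exact hT i

lemma isDelta02_of_mem_fineLambda {θ : Ordinal} {S : Set (ℕ → C)} (hS : S ∈ FineLambda C θ) :
    IsDelta02 S := by
  induction θ using WellFoundedLT.induction generalizing S with
  | _ θ IH =>
  rw [FineLambda] at hS
  split_ifs at hS
  · exact IsOpen.isDelta02 hS
  · obtain ⟨I, T, O, η, hO, hd, hTO, rfl, hT⟩ := hS
    refine .iUnion_of_pairwise_disjoint (fun i => ?_) hO hd hTO
    exact (hT i).elim (IH _ (η i).2) fun h => compl_compl (T i) ▸ (IH _ (η i).2 h).compl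
  · exact absurd hS (notMem_empty S)

end FineHierarchy

section FlipRank

def FlipRel (l : List C → Bool) (t s : List C) : Prop := s <+: t ∧ l t ≠ l s

variable {l : List C → Bool}

lemma FlipRel.length_lt {s t : List C} (h : FlipRel l t s) : s.length < t.length :=
  lt_of_le_of_ne h.1.length_le fun hlen => h.2 (by rw [h.1.eq_of_length hlen])

lemma exists_pref_eq_of_chain {a : ℕ → List C} (hpre : ∀ n, a n <+: a (n + 1))
    (hlen : ∀ n, n ≤ (a n).length) : ∃ ρ : ℕ → C, ∀ n, pref ρ (a n).length = a n := by
  have hmono := Nat.rel_of_forall_rel_succ_of_le (· <+: ·) hpre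
  refine ⟨fun k => (a (k + 1))[k]'(hlen (k + 1)), fun n => List.ext_getElem (by simp) ?_⟩
  intro i hi hin
  rw [getElem_pref, (hmono (le_max_left (i + 1) n)).getElem,
    (hmono (le_max_right (i + 1) n)).getElem]

lemma wellFounded_flipRel (hl : EventuallyConstantLabel l) : WellFounded (FlipRel l) := by
  refine wellFounded_iff_isEmpty_descending_chain.2 ⟨fun ⟨a, ha⟩ => ?_⟩
  have hlen : ∀ n, n ≤ (a n).length := fun n => by
    induction n with
    | zero => exact Nat.zero_le _
    | succ n ih => exact ih.trans_lt (ha n).length_lt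
  obtain ⟨ρ, hρ⟩ := exists_pref_eq_of_chain (fun n => (ha n).1) hlen
  obtain ⟨N, hN⟩ := hl ρ
  have hlabel : ∀ n, N ≤ n → l (a n) = l (pref ρ N) := fun n hn => by
    rw [← hρ n]
    exact hN _ (hn.trans (hlen n))
  exact (ha N).2 ((hlabel (N + 1) N.le_succ).trans (hlabel N le_rfl).symm)

variable (hl : EventuallyConstantLabel l)

def flipRank (s : List C) : Ordinal :=
  Ordinal.lift ((wellFounded_flipRel hl).apply s).rank

lemma flipRank_lt {s t : List C} (h : FlipRel l t s) : flipRank hl t < flipRank hl s :=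
  Ordinal.lift_lt.2 (Acc.rank_lt_of_rel _ h)

lemma flipRank_le {s t : List C} (hst : s <+: t) (hl' : l t = l s) :
    flipRank hl t ≤ flipRank hl s := by
  refine Ordinal.lift_le.2 ?_
  rw [Acc.rank_eq]
  exact ciSup_le' fun u => Order.succ_le_of_lt
    (Acc.rank_lt_of_rel _ ⟨hst.trans u.2.1, hl' ▸ u.2.2⟩)

def flipPotential (s : List C) : Ordinal :=
  2 * flipRank hl s + if l s then 0 else 1

lemma flipPotential_le (s : List C) : flipPotential hl s ≤ 2 * flipRank hl s + 1 := by
  unfold flipPotential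
  split <;> simp

lemma flipPotential_anti {s t : List C} (hst : s <+: t) :
    flipPotential hl t ≤ flipPotential hl s := by
  by_cases hl' : l t = l s
  · unfold flipPotential
    rw [hl']
    gcongr
    exact flipRank_le hl hst hl'
  · refine le_of_lt <| calc
      flipPotential hl t ≤ 2 * flipRank hl t + 1 := flipPotential_le hl t
      _ < 2 * (flipRank hl t + 1) := by rw [mul_add_one]; gcongr; exact one_lt_two
      _ ≤ 2 * flipRank hl s := by
        gcongr
        exact Order.add_one_le_of_lt (flipRank_lt hl ⟨hst, hl'⟩)
      _ ≤ flipPotential hl s := le_self_add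

lemma ordEven_flipPotential_iff (s : List C) :
    OrdEven (flipPotential hl s) ↔ l s = true := by
  unfold flipPotential
  cases l s
  · exact iff_of_false (not_ordEven_two_mul_add_one _) Bool.false_ne_true
  · simpa using ordEven_two_mul _

lemma exists_eventually_flipPotential_eq (ρ : ℕ → C) :
    ∃ μ, (∀ n, μ ≤ flipPotential hl (pref ρ n)) ∧
      ∀ᶠ n in atTop, flipPotential hl (pref ρ n) = μ := by
  obtain ⟨n₀, hn₀⟩ := csInf_mem (range_nonempty fun n => flipPotential hl (pref ρ n))
  refine ⟨_, fun n => csInf_le' (mem_range_self n),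
    eventually_atTop.2 ⟨n₀, fun n hn => le_antisymm ?_ (csInf_le' (mem_range_self n))⟩⟩
  rw [← hn₀]
  exact flipPotential_anti hl (pref_prefix ρ hn)

lemma oneSet_mem_dclass : OneSet l ∈ Dclass C (2 * (flipRank hl [] + 1) + 1) := by
  set θ := 2 * (flipRank hl [] + 1) + 1
  refine ⟨fun η => {ρ | ∃ n, flipPotential hl (pref ρ n) ≤ η}, fun η _ => ?_,
    fun η₁ η₂ h _ ρ ⟨n, hn⟩ => ⟨n, hn.trans h⟩, ?_⟩
  · refine isOpen_iff_forall_cyl.2 fun ρ ⟨n, hn⟩ => ⟨n, fun σ hσ => ⟨n, ?_⟩⟩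
    rwa [mem_cyl_pref.1 hσ]
  ext ρ
  obtain ⟨μ, hμle, hμ⟩ := exists_eventually_flipPotential_eq hl ρ
  have hμO : ∃ n, flipPotential hl (pref ρ n) ≤ μ := hμ.exists.imp fun _ => le_of_eq
  have hμθ : μ < θ := calc
    μ ≤ flipPotential hl [] := (hμle 0).trans (flipPotential_anti hl List.nil_prefix)
    _ ≤ 2 * flipRank hl [] + 1 := flipPotential_le hl []
    _ < 2 * (flipRank hl [] + 1) := by rw [mul_add_one]; gcongr; exact one_lt_two
    _ ≤ θ := le_self_add
  have hsInf : sInf {η | η < θ ∧ ∃ n, flipPotential hl (pref ρ n) ≤ η} = μ :=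
    IsLeast.csInf_eq ⟨⟨hμθ, hμO⟩, fun η ⟨_, n, hn⟩ => (hμle n).trans hn⟩
  have hparity : OrdEven μ ↔ limLabel hl ρ = true := by
    obtain ⟨n, hφ, hlabel⟩ := (hμ.and (eventually_eq_limLabel hl ρ)).exists
    rw [← hφ, ordEven_flipPotential_iff, hlabel]
  have hθ : ¬ OrdEven θ := not_ordEven_two_mul_add_one _
  rw [mem_oneSet_iff_limLabel hl, ← hparity]
  change _ ↔ (_ ∧ (OrdEven (sInf {η | η < θ ∧ ∃ n, flipPotential hl (pref ρ n) ≤ η}) ↔ _))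
  rw [hsInf]
  exact ⟨fun h => ⟨⟨μ, hμθ, hμO⟩, iff_of_true h hθ⟩, fun h => h.2.2 hθ⟩

end FlipRank

section MinimalFlips

def IsMinFlip (l : List C → Bool) (s t : List C) : Prop :=
  s <+: t ∧ l t ≠ l s ∧ ∀ u, s <+: u → u <+: t → u ≠ t → l u = l s

variable {l : List C → Bool}

lemma pairwise_disjoint_cyl_minFlip (s : List C) :
    Pairwise (Disjoint on fun t : {t // IsMinFlip l s t} => cyl t.1) := by
  have hshorter : ∀ t t' : {t // IsMinFlip l s t}, t ≠ t' → ∀ ρ ∈ cyl t.1, ρ ∈ cyl t'.1 →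
      t.1.length ≤ t'.1.length → False := fun t t' hne ρ ht ht' hlen =>
    t.2.2.1 (t'.2.2.2 t.1 t.2.1 (prefix_of_mem_cyl ht ht' hlen) fun h => hne (Subtype.ext h))
  intro t t' hne
  refine Set.disjoint_left.2 fun ρ ht ht' => ?_
  rcases le_total t.1.length t'.1.length with h | h
  · exact hshorter t t' hne ρ ht ht' h
  · exact hshorter t' t hne.symm ρ ht' ht h

variable (hl : EventuallyConstantLabel l)

lemma exists_minFlip {s : List C} {ρ : ℕ → C} (hs : ρ ∈ cyl s) (hρ : limLabel hl ρ ≠ l s) :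
    ∃ t, IsMinFlip l s t ∧ ρ ∈ cyl t := by
  have hex : ∃ m, s.length ≤ m ∧ l (pref ρ m) ≠ l s := by
    obtain ⟨m, hm, hlabel⟩ :=
      ((eventually_ge_atTop s.length).and (eventually_eq_limLabel hl ρ)).exists
    exact ⟨m, hm, hlabel ▸ hρ⟩
  obtain ⟨hsm, hflip⟩ := Nat.find_spec hex
  refine ⟨pref ρ (Nat.find hex), ⟨prefix_of_mem_cyl hs (mem_cyl_pref_self ρ _) (by simpa using hsm),
    hflip, fun u hsu hut hne => ?_⟩, mem_cyl_pref_self ρ _⟩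
  have hu : pref ρ u.length = u := cyl_anti hut (mem_cyl_pref_self ρ _)
  have hlt : u.length < Nat.find hex := by
    refine lt_of_le_of_ne (by simpa using hut.length_le) fun h => hne ?_
    rw [← hu, h]
  have := Nat.find_min hex hlt
  rw [hu, not_and, not_not] at this
  exact this hsu.length_le

def cylLim (s : List C) : Set (ℕ → C) := cyl s ∩ {ρ | limLabel hl ρ = l s}

lemma compl_cylLim_eq (s : List C) :
    (cylLim hl s)ᶜ = (cyl s)ᶜ ∪ ⋃ t : {t // IsMinFlip l s t}, cylLim hl t.1 := by
  ext ρ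
  by_cases hs : ρ ∈ cyl s
  · simp only [cylLim, mem_compl_iff, mem_inter_iff, mem_union, mem_iUnion, hs, true_and,
      not_true_eq_false, false_or]
    constructor
    · intro hρ
      obtain ⟨t, ht, hρt⟩ := exists_minFlip hl hs hρ
      exact ⟨⟨t, ht⟩, hρt, (Bool.eq_not_iff.2 hρ).trans (Bool.eq_not_iff.2 ht.2.1).symm⟩
    · rintro ⟨t, -, hρt⟩
      exact fun h => t.2.2.1 (hρt.symm.trans h)
  · exact iff_of_true (fun h => hs h.1) (Or.inl hs)

lemma compl_cylLim_mem_fineLambda (s : List C) :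
    (cylLim hl s)ᶜ ∈ FineLambda C (flipRank hl s + 2) := by
  induction s using (wellFounded_flipRel hl).induction with
  | _ s IH =>
  -- right addition of ordinals is strictly monotone for finite summands only
  have hlevel : ∀ {a b : Ordinal}, a < b → a + 2 < b + 2 := fun {a b} h => calc
    a + 2 = a + 1 + 1 := by rw [add_assoc, one_add_one_eq_two]
    _ ≤ b + 1 := by gcongr; exact Order.add_one_le_of_lt h
    _ < b + 2 := by gcongr; exact one_lt_two
  rw [compl_cylLim_eq hl s]
  exact union_iUnion_mem_fineLambda (one_lt_two.trans_le le_add_self)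
    (isClosed_cyl s).isOpen_compl (fun t => flipRank hl t.1 + 2)
    (fun t => hlevel (flipRank_lt hl ⟨t.2.1, t.2.2.1⟩)) (fun _ => isOpen_cyl _)
    (pairwise_disjoint_cyl_minFlip s) (fun t => disjoint_compl_left.mono_right (cyl_anti t.2.1))
    (fun _ => inter_subset_left) fun t => Or.inr (IH t.1 ⟨t.2.1, t.2.2.1⟩)

lemma oneSet_mem_fineLambda : OneSet l ∈ FineLambda C (flipRank hl [] + 2 + 1) := by
  have hroot : ∀ ρ, ρ ∈ cylLim hl [] ↔ (ρ ∈ OneSet l ↔ l [] = true) := fun ρ => by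
    simp [cylLim, cyl, pref, mem_oneSet_iff_limLabel hl]
  rw [← empty_union (OneSet l), ← iUnion_const (ι := Unit) (OneSet l)]
  refine union_iUnion_mem_fineLambda (one_lt_two.trans_le le_add_self |>.trans (lt_add_one _))
    isOpen_empty (fun _ => flipRank hl [] + 2) (fun _ => lt_add_one _) (fun _ => isOpen_univ)
    (fun i j hij => absurd (Subsingleton.elim i j) hij) (fun _ => empty_disjoint _)
    (fun _ => subset_univ _) fun _ => ?_
  cases hnil : l []
  · left
    convert compl_cylLim_mem_fineLambda hl []
    ext ρ
    simp [hroot, hnil]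
  · right
    convert compl_cylLim_mem_fineLambda hl []
    ext ρ
    simp [hroot, hnil]

end MinimalFlips

end Delta02

/-- Equivalence of the four representations of `Δ⁰₂` subsets of `C^ω`. -/
theorem statement2 (C : Type) (S : Set (ℕ → C)) :
    List.TFAE
      [(∃ F : ℕ → Set (ℕ → C), (∀ n, IsClosed[seqTop C] (F n)) ∧ S = ⋃ n, F n) ∧
         (∃ O : ℕ → Set (ℕ → C), (∀ n, IsOpen[seqTop C] (O n)) ∧ S = ⋂ n, O n),
       ∃ θ : Ordinal, S ∈ Dclass C θ,
       ∃ θ : Ordinal, S ∈ FineLambda C θ,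
       ∃ l : List C → Bool, EventuallyConstantLabel l ∧ S = OneSet l] := by
  tfae_have 1 → 4 := fun h => Delta02.exists_label_of_isDelta02 (isDelta02_iff.2 h)
  tfae_have 4 → 2 := fun ⟨_, hl, hS⟩ => ⟨_, hS ▸ Delta02.oneSet_mem_dclass hl⟩
  tfae_have 2 → 4 := fun ⟨_, hS⟩ => Delta02.exists_label_of_mem_dclass hS
  tfae_have 4 → 3 := fun ⟨_, hl, hS⟩ => ⟨_, hS ▸ Delta02.oneSet_mem_fineLambda hl⟩
  tfae_have 3 → 1 := fun ⟨_, hS⟩ => isDelta02_iff.1 (Delta02.isDelta02_of_mem_fineLambda hS)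
  tfae_finish
end
end

section
/- A subset S of C^ω belongs to Σ⁰₂ (i.e. S is a countable union of closed sets) if and only if S can be expressed as a co-Büchi condition, i.e. there exists a coloring function c : C* → {0,1} such that for every ρ ∈ C^ω, ρ ∈ S if and only if c(ρ_{<n}) = 1 for only finitely many n ∈ ℕ. -/
/-!
Write `S = ⋃ j, G j` with `G` increasing and closed. For a finite word `w`, let `e(w)` be the
least `j` such that `G j` meets the cylinder of `w`. Along a sequence `ρ` the values `e(ρ_{<n})`
increase, and since each `G j` is closed they stay bounded exactly when `ρ ∈ S`; colouring the
prefixes at which `e` increases therefore gives a co-Büchi condition for `S`. Conversely, the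
sequences whose colour is `0` from position `N` on form a closed set, and a co-Büchi set is the
union of these.
-/

open Set Topology

noncomputable section

open Filter

theorem isClosed_accumulate {X : Type*} [TopologicalSpace X] {F : ℕ → Set X}
    (hF : ∀ i, IsClosed (F i)) (j : ℕ) : IsClosed (accumulate F j) :=
  (finite_Iic j).isClosed_biUnion fun i _ => hF i

theorem Nat.finite_setOf_iff_eventually_not {p : ℕ → Prop} :
    {n | p n}.Finite ↔ ∀ᶠ n in atTop, ¬p n := by
  rw [← Nat.cofinite_eq_atTop, eventually_cofinite]
  simp only [not_not]

theorem Monotone.finite_setOf_ne_pred_iff {a : ℕ → ℕ} (ha : Monotone a) :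
    {n | a n ≠ a (n - 1)}.Finite ↔ BddAbove (range a) := by
  constructor
  · intro hfin
    obtain ⟨N, hN⟩ := eventually_atTop.mp (Nat.finite_setOf_iff_eventually_not.mp hfin)
    have hconst : ∀ n, N ≤ n → a n = a N := by
      refine Nat.le_induction rfl fun n hNn ih => ?_
      simpa [ih] using hN (n + 1) (by omega)
    exact ⟨a N, forall_mem_range.mpr fun n =>
      (ha (le_max_left n N)).trans (hconst _ (le_max_right n N)).le⟩
  · intro hbdd
    obtain ⟨M, hM⟩ := Nat.sSup_mem (range_nonempty a) hbdd
    have hmax : ∀ n, a n ≤ a M := fun n => hM ▸ le_csSup hbdd (mem_range_self n)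
    refine (finite_Iic M).subset fun n hn => ?_
    by_contra hMn
    rw [mem_Iic, not_le] at hMn
    have hle : a M ≤ a (n - 1) := ha (by omega)
    exact hn (le_antisymm (hmax n |>.trans hle) (ha (Nat.sub_le n 1)))

section Prefix

variable {C : Type}

theorem pref_eq_pref_iff {σ ρ : ℕ → C} {n : ℕ} :
    pref σ n = pref ρ n ↔ ∀ i < n, σ i = ρ i := by
  simp [pref, List.map_inj_left]

@[simp]
theorem length_pref (ρ : ℕ → C) (n : ℕ) : (pref ρ n).length = n := by
  simp [pref]

theorem dropLast_pref (ρ : ℕ → C) (n : ℕ) : (pref ρ n).dropLast = pref ρ (n - 1) := by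
  cases n <;> simp [pref, List.range_succ]

theorem pref_eq_pref_of_le {σ ρ : ℕ → C} {m n : ℕ} (hmn : m ≤ n)
    (h : pref σ n = pref ρ n) : pref σ m = pref ρ m :=
  pref_eq_pref_iff.mpr fun i hi => pref_eq_pref_iff.mp h i (hi.trans_le hmn)

theorem pref_eq_ofFn (ρ : ℕ → C) (n : ℕ) : pref ρ n = List.ofFn fun i : Fin n => ρ i := by
  apply List.ext_getElem <;> simp [pref]

end Prefix

section Topology

variable {C : Type} [TopologicalSpace C] [DiscreteTopology C]

theorem isClopen_setOf_pref (P : List C → Prop) (n : ℕ) :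
    IsClopen {σ : ℕ → C | P (pref σ n)} := by
  have hcont : Continuous fun (σ : ℕ → C) (i : Fin n) => σ i := by fun_prop
  simp only [pref_eq_ofFn]
  exact (isClopen_discrete {v : Fin n → C | P (List.ofFn v)}).preimage hcont

theorem IsClosed.mem_of_forall_pref {F : Set (ℕ → C)} (hF : IsClosed F) {ρ : ℕ → C}
    (h : ∀ n, ∃ σ ∈ F, pref σ n = pref ρ n) : ρ ∈ F := by
  choose σ hσF hσ using h
  refine hF.mem_of_tendsto (b := atTop) (tendsto_pi_nhds.mpr fun i => ?_)
    (Eventually.of_forall hσF)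
  rw [nhds_discrete, tendsto_pure, eventually_atTop]
  exact ⟨i + 1, fun n hn => pref_eq_pref_iff.mp (hσ n) i (by omega)⟩

end Topology

section EntryIndex

variable {C : Type}

/-- The cap `|w| ≤ j` keeps the set nonempty (so no junk `sInf ∅ = 0`) without breaking
monotonicity along prefixes. -/
def entryIndex (G : ℕ → Set (ℕ → C)) (w : List C) : ℕ :=
  sInf {j | w.length ≤ j ∨ ∃ σ ∈ G j, pref σ w.length = w}

theorem entryIndex_mem (G : ℕ → Set (ℕ → C)) (w : List C) :
    w.length ≤ entryIndex G w ∨ ∃ σ ∈ G (entryIndex G w), pref σ w.length = w :=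
  Nat.sInf_mem (s := {j | w.length ≤ j ∨ ∃ σ ∈ G j, pref σ w.length = w})
    ⟨_, Or.inl le_rfl⟩

variable {G : ℕ → Set (ℕ → C)} {ρ : ℕ → C}

variable (G ρ) in
theorem entryIndex_pref (n : ℕ) :
    entryIndex G (pref ρ n) = sInf {j | n ≤ j ∨ ∃ σ ∈ G j, pref σ n = pref ρ n} := by
  simp [entryIndex]

variable (G ρ) in
theorem monotone_entryIndex_pref : Monotone fun n => entryIndex G (pref ρ n) := by
  intro m n hmn
  simp only [entryIndex_pref]
  refine csInf_le_csInf (OrderBot.bddBelow _) ⟨n, Or.inl le_rfl⟩ ?_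
  rintro j (hnj | ⟨σ, hσG, hσ⟩)
  · exact Or.inl (hmn.trans hnj)
  · exact Or.inr ⟨σ, hσG, pref_eq_pref_of_le hmn hσ⟩

theorem entryIndex_pref_le_of_mem {i : ℕ} (hρ : ρ ∈ G i) (n : ℕ) :
    entryIndex G (pref ρ n) ≤ i := by
  rw [entryIndex_pref]
  exact Nat.sInf_le (Or.inr ⟨ρ, hρ, rfl⟩)

theorem mem_of_entryIndex_pref_le [TopologicalSpace C] [DiscreteTopology C]
    (hmono : Monotone G) (hclosed : ∀ j, IsClosed (G j)) {B : ℕ}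
    (hB : ∀ n, entryIndex G (pref ρ n) ≤ B) : ρ ∈ G B := by
  refine (hclosed B).mem_of_forall_pref fun n => ?_
  obtain hlt | ⟨σ, hσG, hσ⟩ := entryIndex_mem G (pref ρ (B + 1 + n))
  · rw [length_pref] at hlt
    exact absurd (hlt.trans (hB _)) (by omega)
  · rw [length_pref] at hσ
    exact ⟨σ, hmono (hB _) hσG, pref_eq_pref_of_le (by omega) hσ⟩

theorem bddAbove_entryIndex_pref_iff [TopologicalSpace C] [DiscreteTopology C]
    (hmono : Monotone G) (hclosed : ∀ j, IsClosed (G j)) :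
    BddAbove (range fun n => entryIndex G (pref ρ n)) ↔ ρ ∈ ⋃ j, G j := by
  simp only [bddAbove_def, forall_mem_range, mem_iUnion]
  exact ⟨fun ⟨B, hB⟩ => ⟨B, mem_of_entryIndex_pref_le hmono hclosed hB⟩,
    fun ⟨i, hi⟩ => ⟨i, entryIndex_pref_le_of_mem hi⟩⟩

end EntryIndex

section CoBuchi

variable {C : Type} [TopologicalSpace C] [DiscreteTopology C]

theorem isClosed_setOf_forall_pref (P : ℕ → List C → Prop) :
    IsClosed {σ : ℕ → C | ∀ n, P n (pref σ n)} := by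
  simp only [ofPred_forall]
  exact isClosed_iInter fun n => (isClopen_setOf_pref (P n) n).isClosed

theorem exists_coBuchi_of_monotone_isClosed {G : ℕ → Set (ℕ → C)} (hmono : Monotone G)
    (hclosed : ∀ j, IsClosed (G j)) :
    ∃ c : List C → Bool, ∀ ρ, ρ ∈ ⋃ j, G j ↔ {n | c (pref ρ n) = true}.Finite := by
  refine ⟨fun w => decide (entryIndex G w ≠ entryIndex G w.dropLast), fun ρ => ?_⟩
  simp only [dropLast_pref, decide_eq_true_eq]
  rw [(monotone_entryIndex_pref G ρ).finite_setOf_ne_pred_iff,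
    bddAbove_entryIndex_pref_iff hmono hclosed]

end CoBuchi

/-- `S ⊆ C^ω` is a countable union of closed sets iff it can be expressed as a
co-Büchi condition. -/
theorem statement4 (C : Type) (S : Set (ℕ → C)) :
    (∃ F : ℕ → Set (ℕ → C), (∀ n, IsClosed[seqTop C] (F n)) ∧ S = ⋃ n, F n) ↔
      ∃ c : List C → Bool, ∀ ρ : ℕ → C,
        ρ ∈ S ↔ {n : ℕ | c (pref ρ n) = true}.Finite := by
  let : TopologicalSpace C := ⊥
  have : DiscreteTopology C := ⟨rfl⟩
  constructor
  · rintro ⟨F, hF, rfl⟩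
    rw [← iUnion_accumulate]
    exact exists_coBuchi_of_monotone_isClosed monotone_accumulate (isClosed_accumulate hF)
  · rintro ⟨c, hc⟩
    refine ⟨fun N => {ρ | ∀ n, N ≤ n → c (pref ρ n) = false},
      fun N => isClosed_setOf_forall_pref fun n w => N ≤ n → c w = false, ?_⟩
    ext ρ
    simp only [hc, Nat.finite_setOf_iff_eventually_not, eventually_atTop, Bool.not_eq_true,
      mem_iUnion, mem_ofPred_eq]
end
end

section
/- Let A and B be finite nonempty sets and let W ⊆ (A×B)^ω be an open set for the product topology. If the empty history belongs to Γ (equivalently, Player 1 has a winning strategy from the empty history), then Player 1 has a finite-memory winning strategy from the empty history. -/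
open Set Topology

noncomputable section

/-- Concatenation of a finite history and an infinite play. -/
def catSeq {C : Type} (h : List C) (ρ : ℕ → C) : ℕ → C := fun n =>
  if hn : n < h.length then h.get ⟨n, hn⟩ else ρ (n - h.length)

/-- `W_h = {ρ : hρ ∈ W}`, the winning set induced by the history `h`. -/
def WinAfter {A B : Type} (W : Set (ℕ → A × B)) (h : List (A × B)) : Set (ℕ → A × B) :=
  {ρ | catSeq h ρ ∈ W}

/-- Finite prefixes of the outcome `out(h,s,β)`: after `h`, Player 1 follows `s`
and Player 2 plays the successive letters of `β`. -/
def outPrefix {A B : Type} (h : List (A × B)) (s : List (A × B) → A) (β : ℕ → B) :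
    ℕ → List (A × B)
  | 0 => h
  | n + 1 => outPrefix h s β n ++ [(s (outPrefix h s β n), β n)]

/-- The outcome `out(h,s,β)`. -/
def out {A B : Type} (h : List (A × B)) (s : List (A × B) → A) (β : ℕ → B) : ℕ → A × B :=
  fun n =>
    if hn : n < h.length then h.get ⟨n, hn⟩
    else (s (outPrefix h s β (n - h.length)), β (n - h.length))

/-- `s` is a winning strategy (for Player 1) from the history `h`. -/
def WinningFrom {A B : Type} (W : Set (ℕ → A × B)) (s : List (A × B) → A)
    (h : List (A × B)) : Prop :=
  ∀ β : ℕ → B, out h s β ∈ W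

/-- `h` is a winning history: some strategy is winning from `h`. -/
def WinningHistory {A B : Type} (W : Set (ℕ → A × B)) (h : List (A × B)) : Prop :=
  ∃ s, WinningFrom W s h

/-- The action `a` is non-losing at the history `h`. -/
def NonLosing {A B : Type} (W : Set (ℕ → A × B)) (h : List (A × B)) (a : A) : Prop :=
  ∀ b : B, WinningHistory W (h ++ [(a, b)])

/-- `Γ`: the set of histories along which Player 1 has only played non-losing actions
(in particular `ε ∈ Γ` requires `ε` to be a winning history). -/
def Gamma {A B : Type} (W : Set (ℕ → A × B)) : Set (List (A × B)) :=
  {h | WinningHistory W ([] : List (A × B)) ∧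
    ∀ k (hk : k < h.length), NonLosing W (h.take k) (h.get ⟨k, hk⟩).1}

/-- `s` is a finite-memory strategy: it is induced by a finite-memory decision machine
`(M, σ, μ, m₀)`. -/
def FiniteMemory {A B : Type} (s : List (A × B) → A) : Prop :=
  ∃ (M : Type) (_ : Fintype M) (σ : M → A) (μ : M → A × B → M) (m₀ : M),
    ∀ h : List (A × B), s h = σ (h.foldl μ m₀)

/-! Since `W` is open, every play consistent with a winning strategy `s` enters `W` after finitely
many rounds, in the sense that a finite prefix already forces membership in `W`. As Player 2's
strategy space `ℕ → B` is compact, these depths are bounded by some `n`. Hence `s` may forget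
everything after round `n`: the strategy `h ↦ s (h.take n)` is still winning, and it only needs
to remember the first `n` moves, which is a finite memory. -/

open PiNat

lemma exists_cylinder_subset_of_isOpen {C : Type} {W : Set (ℕ → C)} (hW : IsOpen[seqTop C] W)
    {ρ : ℕ → C} (hρ : ρ ∈ W) : ∃ n, cylinder ρ n ⊆ W := by
  let : TopologicalSpace C := ⊥
  have : DiscreteTopology C := ⟨rfl⟩
  obtain ⟨_, ⟨x, n, rfl⟩, hρx, hsub⟩ :=
    (isTopologicalBasis_cylinders fun _ => C).exists_subset_of_mem_open hρ hW
  exact ⟨n, mem_cylinder_iff_eq.1 hρx ▸ hsub⟩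

section Outcome

variable {A B : Type} {h : List (A × B)} {s s' : List (A × B) → A} {β β' : ℕ → B} {m : ℕ}

lemma outPrefix_length (h : List (A × B)) (s : List (A × B) → A) (β : ℕ → B) (k : ℕ) :
    (outPrefix h s β k).length = h.length + k := by
  induction k with
  | zero => rfl
  | succ k ih => simp [outPrefix, ih, Nat.add_assoc]

lemma outPrefix_eq_of_agree (hs : ∀ h', h'.length < h.length + m → s' h' = s h')
    (hβ : β' ∈ cylinder β m) {k : ℕ} (hk : k ≤ m) :
    outPrefix h s' β' k = outPrefix h s β k := by
  induction k with
  | zero => rfl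
  | succ k ih =>
    have hlen := outPrefix_length h s β k
    rw [outPrefix, outPrefix, ih (by omega), hs _ (by omega), hβ k (by omega)]

lemma out_mem_cylinder (hs : ∀ h', h'.length < h.length + m → s' h' = s h')
    (hβ : β' ∈ cylinder β m) : out h s' β' ∈ cylinder (out h s β) (h.length + m) := by
  intro i hi
  unfold out
  split_ifs with hih
  · rfl
  · have hlen := outPrefix_length h s β (i - h.length)
    rw [outPrefix_eq_of_agree hs hβ (by omega), hs _ (by omega), hβ _ (by omega)]

end Outcome

lemma exists_cylinder_subset_of_winningFrom {A B : Type} [Finite B] {W : Set (ℕ → A × B)}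
    (hW : IsOpen[seqTop (A × B)] W) {s : List (A × B) → A} {h : List (A × B)}
    (hs : WinningFrom W s h) : ∃ n, ∀ β, cylinder (out h s β) n ⊆ W := by
  let : TopologicalSpace B := ⊥
  have : DiscreteTopology B := ⟨rfl⟩
  choose N hN using fun β => exists_cylinder_subset_of_isOpen hW (hs β)
  obtain ⟨t, ht⟩ := isCompact_univ.elim_finite_subcover (fun β => cylinder β (N β))
    (fun β => isOpen_cylinder _ β (N β)) fun β _ => mem_iUnion.2 ⟨β, self_mem_cylinder β _⟩
  refine ⟨h.length + t.sup N, fun β => ?_⟩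
  obtain ⟨β₀, hβ₀t, hβ⟩ := mem_iUnion₂.1 (ht (mem_univ β))
  have hout := out_mem_cylinder (s := s) (h := h) (fun _ _ => rfl) hβ
  calc cylinder (out h s β) (h.length + t.sup N)
      ⊆ cylinder (out h s β) (h.length + N β₀) :=
        cylinder_anti _ (Nat.add_le_add_left (Finset.le_sup hβ₀t) _)
    _ = cylinder (out h s β₀) (h.length + N β₀) := mem_cylinder_iff_eq.1 hout
    _ ⊆ cylinder (out h s β₀) (N β₀) := cylinder_anti _ (Nat.le_add_left _ _)
    _ ⊆ W := hN β₀

lemma take_append_singleton_take {α : Type} (n : ℕ) (l : List α) (c : α) :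
    ((l.take n) ++ [c]).take n = (l ++ [c]).take n := by
  simp only [List.take_append, List.take_take, min_self, List.length_take]
  rcases le_total n l.length with hn | hn <;> simp [hn, Nat.sub_eq_zero_of_le]

lemma finiteMemory_comp_take {A B : Type} [Finite A] [Finite B] (s : List (A × B) → A) (n : ℕ) :
    FiniteMemory fun h => s (h.take n) := by
  let M := {l : List (A × B) // l.length ≤ n}
  have : Finite M := (List.finite_length_le (A × B) n).to_subtype
  let μ : M → A × B → M := fun l c => ⟨(l.val ++ [c]).take n, List.length_take_le _ _⟩
  have hfold : ∀ h : List (A × B), (h.foldl μ ⟨[], Nat.zero_le n⟩).val = h.take n := by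
    intro h
    induction h using List.reverseRecOn with
    | nil => simp
    | append_singleton h c ih =>
      rw [List.foldl_append, List.foldl_cons, List.foldl_nil]
      simp only [μ, ih, take_append_singleton_take]
  exact ⟨M, Fintype.ofFinite M, fun l => s l.val, μ, ⟨[], Nat.zero_le n⟩,
    fun h => congrArg s (hfold h).symm⟩

theorem statement6_general {A B : Type} [Fintype A] [Fintype B]
    (W : Set (ℕ → A × B)) (hW : IsOpen[seqTop (A × B)] W)
    (hε : ([] : List (A × B)) ∈ Gamma W) :
    ∃ s : List (A × B) → A, FiniteMemory s ∧ WinningFrom W s [] := by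
  obtain ⟨⟨s, hs⟩, -⟩ := hε
  obtain ⟨n, hn⟩ := exists_cylinder_subset_of_winningFrom hW hs
  have hagree : ∀ h : List (A × B), h.length < ([] : List (A × B)).length + n →
      s (h.take n) = s h := fun h hh => by rw [List.take_of_length_le (by simp at hh; omega)]
  refine ⟨fun h => s (h.take n), finiteMemory_comp_take s n, fun β => hn β ?_⟩
  simpa using out_mem_cylinder hagree (self_mem_cylinder β n)

/-- If `W` is an open set and the empty history belongs to `Γ`, then Player 1 has a
finite-memory winning strategy from the empty history. -/
theorem statement6 {A B : Type} [Fintype A] [Fintype B] [Nonempty A] [Nonempty B]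
    (W : Set (ℕ → A × B)) (hW : IsOpen[seqTop (A × B)] W)
    (hε : ([] : List (A × B)) ∈ Gamma W) :
    ∃ s : List (A × B) → A, FiniteMemory s ∧ WinningFrom W s [] :=
  statement6_general W hW hε
end
end

section
/- Let A and B be finite nonempty sets and let W ⊆ (A×B)^ω be a closed set for the product topology. Assume that set inclusion induces a well partial order on the family {W_h : h ∈ Γ}, i.e. for every sequence (h_n)_{n∈ℕ} of histories in Γ there exist k < l with W_{h_k} ⊆ W_{h_l}. If the empty history belongs to Γ, then Player 1 has a finite-memory winning strategy from the empty history. -/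
/-!
The residuals `W_h`, `h ∈ Γ`, are well partially ordered by inclusion, so each of them contains a
minimal one and there are only finitely many minimal ones. These serve as memory states: in a
state `m = W_g` Player 1 plays a non-losing action `a` at the representative `g`, and on Player 2's
answer `b` moves to a minimal residual contained in `W_{g(a,b)}`. Inductively, the residual of the
current state is contained in the residual of the actual history, so every finite prefix of the
resulting play extends to a play in `W`; since `W` is closed, the play itself lies in `W`.
-/

open Set Topology

noncomputable section

theorem catSeq_eq_appendStream {C : Type} (h : List C) (ρ : ℕ → C) :
    catSeq h ρ = h ++ₛ ρ := by
  funext n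
  rcases lt_or_ge n h.length with hn | hn
  · simp only [catSeq, List.get_eq_getElem, dif_pos hn]
    exact (Stream'.get_append_left n h ρ hn).symm
  · obtain ⟨k, rfl⟩ := Nat.exists_eq_add_of_le hn
    simp only [catSeq, List.get_eq_getElem, dif_neg (Nat.not_lt.2 hn), Nat.add_sub_cancel_left]
    exact (Stream'.get_append_right k h ρ).symm

theorem catSeq_nil {C : Type} (ρ : ℕ → C) : catSeq [] ρ = ρ := by
  rw [catSeq_eq_appendStream]
  rfl

theorem catSeq_append {C : Type} (h₁ h₂ : List C) (ρ : ℕ → C) :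
    catSeq (h₁ ++ h₂) ρ = catSeq h₁ (catSeq h₂ ρ) := by
  rw [catSeq_eq_appendStream, catSeq_eq_appendStream, catSeq_eq_appendStream]
  exact Stream'.append_append_stream h₁ h₂ ρ

theorem winAfter_nil {A B : Type} (W : Set (ℕ → A × B)) : WinAfter W [] = W := by
  simp only [WinAfter, catSeq_nil, ofPred_mem_eq]

theorem winAfter_append {A B : Type} (W : Set (ℕ → A × B)) (h₁ h₂ : List (A × B)) :
    WinAfter W (h₁ ++ h₂) = WinAfter (WinAfter W h₁) h₂ := by
  simp only [WinAfter, catSeq_append, mem_ofPred_eq]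

theorem winAfter_mono {A B : Type} {W W' : Set (ℕ → A × B)} (hWW' : W ⊆ W')
    (h : List (A × B)) : WinAfter W h ⊆ WinAfter W' h :=
  fun _ hρ => hWW' hρ

theorem IsClosed.mem_of_forall_take {C : Type} {W : Set (ℕ → C)} (hW : IsClosed[seqTop C] W)
    (x : ℕ → C) (hx : ∀ n, ∃ ρ, catSeq (Stream'.take n x) ρ ∈ W) : x ∈ W := by
  let _ : TopologicalSpace C := ⊥
  have : DiscreteTopology C := ⟨rfl⟩
  choose ρ hρ using hx
  refine hW.mem_of_tendsto (tendsto_pi_nhds.2 fun i => tendsto_const_nhds.congr' ?_)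
    (Filter.Eventually.of_forall (f := Filter.atTop) hρ)
  filter_upwards [Filter.eventually_gt_atTop i] with n hin
  have hlen : i < (Stream'.take n x).length := hin.trans_eq (Stream'.length_take n x).symm
  rw [catSeq_eq_appendStream]
  exact ((Stream'.get_append_left i _ _ hlen).trans (Stream'.take_get i n x hlen)).symm

section Plays

variable {A B : Type}

theorem length_outPrefix (h : List (A × B)) (s : List (A × B) → A) (β : ℕ → B) (n : ℕ) :
    (outPrefix h s β n).length = h.length + n := by
  induction n with
  | zero => rfl
  | succ n ih => simp [outPrefix, ih, Nat.add_assoc]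

theorem outPrefix_succ' (h : List (A × B)) (s : List (A × B) → A) (β : ℕ → B) (n : ℕ) :
    outPrefix h s β (n + 1) = outPrefix (h ++ [(s h, β 0)]) s (fun k => β (k + 1)) n := by
  induction n with
  | zero => rfl
  | succ n ih => rw [outPrefix, ih]; rfl

theorem out_eq_catSeq_outPrefix (h : List (A × B)) (s : List (A × B) → A) (β : ℕ → B)
    (n : ℕ) : out h s β =
      catSeq (outPrefix h s β n) fun k => (s (outPrefix h s β (n + k)), β (n + k)) := by
  induction n with
  | zero => simp only [Nat.zero_add]; rfl
  | succ n ih =>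
    rw [ih, outPrefix, catSeq_append]
    congr 1
    funext k
    cases k with
    | zero => simp [catSeq]
    | succ k => simp [catSeq, Nat.add_right_comm n, Nat.add_assoc]

theorem out_append_singleton (h : List (A × B)) (s : List (A × B) → A) (β : ℕ → B) :
    out (h ++ [(s h, β 0)]) s (fun k => β (k + 1)) = out h s β := by
  rw [out_eq_catSeq_outPrefix h s β 1]
  simp only [Nat.add_comm 1, outPrefix_succ']
  rfl

theorem take_out_nil (s : List (A × B) → A) (β : ℕ → B) (n : ℕ) :
    Stream'.take n (out [] s β) = outPrefix [] s β n := by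
  have hlen : (outPrefix [] s β n).length = n :=
    (length_outPrefix [] s β n).trans (Nat.zero_add n)
  rw [out_eq_catSeq_outPrefix [] s β n, catSeq_eq_appendStream]
  exact (Stream'.take_append_of_le_length _ _ _ hlen.ge).trans (List.take_of_length_le hlen.le)

end Plays

theorem Set.IsPWO.finite_setOf_minimal {α : Type*} [PartialOrder α] {S : Set α}
    (hS : S.IsPWO) : {m | Minimal (· ∈ S) m}.Finite :=
  (setOfPred_minimal_antichain (· ∈ S)).finite_of_partiallyWellOrderedOn
    (hS.mono fun _ hm => Minimal.prop hm)

section Game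

variable {A B : Type} {W : Set (ℕ → A × B)}

theorem WinningFrom.append_singleton {s : List (A × B) → A} {h : List (A × B)}
    (hs : WinningFrom W s h) (b : B) : WinningFrom W s (h ++ [(s h, b)]) := fun β => by
  have hout : out (h ++ [(s h, b)]) s β = out h s (Stream'.cons b β) :=
    out_append_singleton h s (Stream'.cons b β)
  rw [hout]
  exact hs _

theorem WinningHistory.exists_nonLosing {h : List (A × B)} (hh : WinningHistory W h) :
    ∃ a, NonLosing W h a :=
  let ⟨s, hs⟩ := hh
  ⟨s h, fun b => ⟨s, hs.append_singleton b⟩⟩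

theorem WinningHistory.winAfter_nonempty [Nonempty B] {h : List (A × B)}
    (hh : WinningHistory W h) : (WinAfter W h).Nonempty :=
  let ⟨s, hs⟩ := hh
  let β : ℕ → B := fun _ => Classical.arbitrary B
  ⟨fun n => (s (outPrefix h s β n), β n), hs β⟩

theorem append_singleton_mem_Gamma_iff {h : List (A × B)} {a : A} {b : B} :
    h ++ [(a, b)] ∈ Gamma W ↔ h ∈ Gamma W ∧ NonLosing W h a := by
  have hprefix : ∀ k (hk : k < h.length), NonLosing W ((h ++ [(a, b)]).take k)
      ((h ++ [(a, b)]).get ⟨k, by simp; omega⟩).1 ↔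
        NonLosing W (h.take k) (h.get ⟨k, hk⟩).1 := by
    intro k hk
    simp [List.take_append_of_le_length hk.le, List.getElem_append_left hk]
  have hlast : NonLosing W ((h ++ [(a, b)]).take h.length)
      ((h ++ [(a, b)]).get ⟨h.length, by simp⟩).1 ↔ NonLosing W h a := by
    simp
  constructor
  · rintro ⟨hε, hall⟩
    exact ⟨⟨hε, fun k hk => (hprefix k hk).1 (hall k (by simp; omega))⟩,
      hlast.1 (hall _ (by simp))⟩
  · rintro ⟨⟨hε, hall⟩, ha⟩
    refine ⟨hε, fun k hk => ?_⟩
    rcases Nat.lt_succ_iff_lt_or_eq.1 (by simpa using hk) with hk' | rfl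
    · exact (hprefix k hk').2 (hall k hk')
    · exact hlast.2 ha

theorem winningHistory_of_mem_Gamma {h : List (A × B)} (hh : h ∈ Gamma W) :
    WinningHistory W h := by
  induction h using List.reverseRecOn with
  | nil => exact hh.1
  | append_singleton h c => exact (append_singleton_mem_Gamma_iff.1 hh).2 c.2

theorem winningFrom_nil_of_memory {M : Type} (hW : IsClosed[seqTop (A × B)] W)
    (R : M → Set (ℕ → A × B)) (σ : M → A) (δ : M → B → M) (m₀ : M)
    (hne : ∀ m, (R m).Nonempty) (h₀ : R m₀ ⊆ W)
    (hδ : ∀ m b, R (δ m b) ⊆ WinAfter (R m) [(σ m, b)]) :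
    WinningFrom W (fun h => σ (h.foldl (fun m c => δ m c.2) m₀)) [] := by
  intro β
  set s : List (A × B) → A := fun h => σ (h.foldl (fun m c => δ m c.2) m₀)
  have hinv : ∀ n, R ((outPrefix [] s β n).foldl (fun m c => δ m c.2) m₀) ⊆
      WinAfter W (outPrefix [] s β n) := by
    intro n
    induction n with
    | zero => rwa [outPrefix, winAfter_nil]
    | succ n ih =>
      rw [outPrefix, List.foldl_append, winAfter_append]
      exact (hδ _ _).trans (winAfter_mono ih _)
  refine hW.mem_of_forall_take _ fun n => ?_
  rw [take_out_nil]
  exact ⟨_, hinv n (hne _).some_mem⟩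

end Game

theorem statement7_general {A B : Type} [Nonempty B]
    (W : Set (ℕ → A × B)) (hW : IsClosed[seqTop (A × B)] W)
    (hwpo : ∀ h : ℕ → List (A × B), (∀ n, h n ∈ Gamma W) →
      ∃ k l : ℕ, k < l ∧ WinAfter W (h k) ⊆ WinAfter W (h l))
    (hε : ([] : List (A × B)) ∈ Gamma W) :
    ∃ s : List (A × B) → A, FiniteMemory s ∧ WinningFrom W s [] := by
  have hpwo : (WinAfter W '' Gamma W).IsPWO :=
    (partiallyWellOrderedOn_iff_exists_lt.2 hwpo).image_of_monotone_on fun _ _ _ _ h => h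
  let M := {m | Minimal (· ∈ WinAfter W '' Gamma W) m}
  have : Fintype M := hpwo.finite_setOf_minimal.fintype
  have hmin : ∀ h ∈ Gamma W, ∃ m : M, m.1 ⊆ WinAfter W h := fun h hh =>
    let ⟨m, hle, hm⟩ := hpwo.exists_le_minimal (mem_image_of_mem _ hh)
    ⟨⟨m, hm⟩, hle⟩
  choose g hgΓ hgW using fun m : M => m.2.prop
  choose σ hσ using fun m : M => (winningHistory_of_mem_Gamma (hgΓ m)).exists_nonLosing
  choose δ hδ using fun (m : M) (b : B) =>
    hmin _ (append_singleton_mem_Gamma_iff.2 ⟨hgΓ m, hσ m⟩ : g m ++ [(σ m, b)] ∈ Gamma W)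
  obtain ⟨m₀, hm₀⟩ := hmin [] hε
  refine ⟨_, ⟨M, inferInstance, σ, fun m c => δ m c.2, m₀, fun _ => rfl⟩,
    winningFrom_nil_of_memory hW Subtype.val σ δ m₀ (fun m => ?_) ?_ fun m b => ?_⟩
  · exact hgW m ▸ (winningHistory_of_mem_Gamma (hgΓ m)).winAfter_nonempty
  · rwa [winAfter_nil] at hm₀
  · rw [← hgW m, ← winAfter_append]
    exact hδ m b

/-- If `W` is a closed set, inclusion induces a well partial order on the winning sets
induced by histories in `Γ`, and the empty history belongs to `Γ`, then Player 1 has a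
finite-memory winning strategy from the empty history. -/
theorem statement7 {A B : Type} [Fintype A] [Fintype B] [Nonempty A] [Nonempty B]
    (W : Set (ℕ → A × B)) (hW : IsClosed[seqTop (A × B)] W)
    (hwpo : ∀ h : ℕ → List (A × B), (∀ n, h n ∈ Gamma W) →
      ∃ k l : ℕ, k < l ∧ WinAfter W (h k) ⊆ WinAfter W (h l))
    (hε : ([] : List (A × B)) ∈ Gamma W) :
    ∃ s : List (A × B) → A, FiniteMemory s ∧ WinningFrom W s [] :=
  statement7_general W hW hwpo hε
end
end

section
/- For every nonzero ordinal θ, the collection Λ_θ of subsets of C^ω is closed under open union: if (S_i)_{i∈I} is a family of sets in Λ_θ and there exists a family of pairwise disjoint open sets (O_i)_{i∈I} with S_i ⊆ O_i for each i, then ∪_{i∈I} S_i ∈ Λ_θ. -/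
open Set Topology

noncomputable section

lemma Pairwise.disjoint_sigma_inter {α ι : Type*} {κ : ι → Type*} {O : ι → Set α}
    {O' : ∀ i, κ i → Set α} (hO : Pairwise fun i j => Disjoint (O i) (O j))
    (hO' : ∀ i, Pairwise fun j k => Disjoint (O' i j) (O' i k)) :
    Pairwise fun p q : Σ i, κ i => Disjoint (O p.1 ∩ O' p.1 p.2) (O q.1 ∩ O' q.1 q.2) := by
  rintro ⟨i, j⟩ ⟨i', j'⟩ hne
  rcases eq_or_ne i i' with rfl | hii
  · have hjj : j ≠ j' := fun h => hne (by rw [h])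
    exact (hO' i hjj).mono inter_subset_right inter_subset_right
  · exact (hO hii).mono inter_subset_left inter_subset_left

lemma mem_fineLambda_one {C : Type} {S : Set (ℕ → C)} :
    S ∈ FineLambda C 1 ↔ IsOpen[seqTop C] S := by
  rw [FineLambda, if_pos rfl, mem_ofPred_eq]

lemma mem_fineLambda_of_one_lt {C : Type} {θ : Ordinal} (hθ : 1 < θ) {S : Set (ℕ → C)} :
    S ∈ FineLambda C θ ↔ ∃ (I : Type) (T O : I → Set (ℕ → C)) (η : I → {x : Ordinal // x < θ}),
      (∀ i, IsOpen[seqTop C] (O i)) ∧ (Pairwise fun i j => Disjoint (O i) (O j)) ∧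
      (∀ i, T i ⊆ O i) ∧ S = ⋃ i, T i ∧
      ∀ i, T i ∈ FineLambda C (η i) ∨ (T i)ᶜ ∈ FineLambda C (η i) := by
  rw [FineLambda, if_neg hθ.ne', if_pos hθ, mem_ofPred_eq]

/-- Each level `Λ_θ` is closed under open union. -/
theorem statement16 (C : Type) (θ : Ordinal) (hθ : θ ≠ 0) (I : Type)
    (T O : I → Set (ℕ → C)) (hT : ∀ i, T i ∈ FineLambda C θ)
    (hopen : ∀ i, IsOpen[seqTop C] (O i))
    (hdisj : Pairwise fun i j => Disjoint (O i) (O j))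
    (hsub : ∀ i, T i ⊆ O i) :
    (⋃ i, T i) ∈ FineLambda C θ := by
  rcases (Order.one_le_iff_ne_zero.mpr hθ).eq_or_lt with rfl | hθ
  · simp only [mem_fineLambda_one] at hT ⊢
    exact @isOpen_iUnion _ _ (seqTop C) _ hT
  -- Each `T i` is an open union of pieces `T' i j ⊆ O' i j`; shrinking `O' i j` to
  -- `O i ∩ O' i j` makes all pieces together an open union.
  choose J T' O' η hO' hdisj' hsub' hTeq hpiece using
    fun i => (mem_fineLambda_of_one_lt hθ).1 (hT i)
  refine (mem_fineLambda_of_one_lt hθ).2 ⟨Σ i, J i, fun p => T' p.1 p.2,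
    fun p => O p.1 ∩ O' p.1 p.2, fun p => η p.1 p.2,
    fun p => @IsOpen.inter _ (seqTop C) _ _ (hopen p.1) (hO' p.1 p.2),
    hdisj.disjoint_sigma_inter hdisj', fun ⟨i, j⟩ => ?_,
    by rw [iUnion_sigma]; exact iUnion_congr hTeq, fun p => hpiece p.1 p.2⟩
  exact subset_inter ((subset_iUnion (T' i) j).trans ((hTeq i).symm ▸ hsub i)) (hsub' i j)
end
end
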